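/- arXiv:1111.1371 — 5 statements merged into one kernel-verified Lean document; each statement's English description precedes it below -/
import Mathlib

section
/- Weighted Poincaré-type inequality: for every function u in H¹(K), (1/2) ∫_ℝ |u(ξ)|² K(ξ) dξ ≤ ∫_ℝ |u'(ξ)|² K(ξ) dξ, where K(ξ) = exp(ξ²/4). -/
open Real MeasureTheory Set Filter Topology

/-- If `f` is nonnegative and integrable, then `(b/2) * f b` dips below any `ε` beyond any `M`. -/
lemma aux_small (f : ℝ → ℝ) (hf : Integrable f)
    {ε : ℝ} (hε : 0 < ε) (M : ℝ) : ∃ b, M < b ∧ b / 2 * f b < ε := by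
  by_contra hcon
  push_neg at hcon
  set M' : ℝ := max M 1 with hM'def
  have h1M : (1:ℝ) ≤ M' := le_max_right _ _
  have hM'pos : (0:ℝ) < M' := lt_of_lt_of_le one_pos h1M
  have hmeas : AEStronglyMeasurable (fun ξ : ℝ => 2 * ε * ξ⁻¹)
      (volume.restrict (Ioi M')) :=
    ((measurable_inv.const_mul (2 * ε)).aestronglyMeasurable)
  have hbound : ∀ᵐ ξ ∂(volume.restrict (Ioi M')), ‖2 * ε * ξ⁻¹‖ ≤ f ξ := by
    rw [ae_restrict_iff' measurableSet_Ioi]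
    filter_upwards with ξ hξ
    have hξpos : (0:ℝ) < ξ := lt_trans hM'pos hξ
    have hMξ : M < ξ := lt_of_le_of_lt (le_max_left M 1) hξ
    have h1 : ε ≤ ξ / 2 * f ξ := hcon ξ hMξ
    have h2 : 2 * ε * ξ⁻¹ ≤ f ξ := by
      rw [mul_inv_le_iff₀ hξpos]
      nlinarith
    rw [Real.norm_eq_abs, abs_of_nonneg (by positivity)]
    exact h2
  have hint : IntegrableOn (fun ξ : ℝ => 2 * ε * ξ⁻¹) (Ioi M') :=
    Integrable.mono' hf.integrableOn hmeas hbound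
  have hint2 : IntegrableOn (fun ξ : ℝ => ξ⁻¹) (Ioi M') := by
    have h' : IntegrableOn (fun ξ : ℝ => (2 * ε)⁻¹ * (2 * ε * ξ⁻¹)) (Ioi M') :=
      hint.const_mul (2 * ε)⁻¹
    have hne : (2 * ε) ≠ 0 := by positivity
    refine h'.congr_fun (fun ξ _ => ?_) measurableSet_Ioi
    field_simp
  have hint3 : IntegrableOn (fun ξ : ℝ => ξ ^ (-1 : ℝ)) (Ioi M') := by
    refine hint2.congr_fun (fun ξ _ => ?_) measurableSet_Ioi
    rw [Real.rpow_neg_one]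
  rw [integrableOn_Ioi_rpow_iff hM'pos] at hint3
  linarith

/-- Weighted Poincaré-type inequality: for `u ∈ H¹(K)` with `K(ξ) = e^{ξ²/4}`,
`(1/2) ∫ u² K ≤ ∫ (u')² K`. -/
theorem weighted_poincare (u : ℝ → ℝ) (hu : Differentiable ℝ u)
    (h1 : Integrable fun ξ : ℝ => (u ξ) ^ 2 * Real.exp (ξ ^ 2 / 4))
    (h2 : Integrable fun ξ : ℝ => (deriv u ξ) ^ 2 * Real.exp (ξ ^ 2 / 4)) :
    (1 / 2) * (∫ ξ : ℝ, (u ξ) ^ 2 * Real.exp (ξ ^ 2 / 4)) ≤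
      ∫ ξ : ℝ, (deriv u ξ) ^ 2 * Real.exp (ξ ^ 2 / 4) := by
  set K : ℝ → ℝ := fun ξ => Real.exp (ξ ^ 2 / 4) with hKdef
  have hKpos : ∀ ξ, 0 < K ξ := fun ξ => Real.exp_pos _
  have hKderiv : ∀ ξ : ℝ, HasDerivAt K (ξ / 2 * K ξ) ξ := by
    intro ξ
    have hp : HasDerivAt (fun ξ : ℝ => ξ ^ 2 / 4) (ξ / 2) ξ := by
      have := (hasDerivAt_pow 2 ξ).div_const 4
      refine this.congr_deriv ?_
      norm_num
      ring
    simpa [hKdef, mul_comm] using hp.exp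
  set g : ℝ → ℝ := fun ξ => ξ / 2 * (u ξ) ^ 2 * K ξ with hgdef
  set h : ℝ → ℝ := fun ξ => (1 / 2) * ((u ξ) ^ 2 * K ξ) - (deriv u ξ) ^ 2 * K ξ with hhdef
  set q : ℝ → ℝ := fun ξ => (deriv u ξ + ξ * u ξ / 2) ^ 2 * K ξ with hqdef
  have hqnn : ∀ ξ, 0 ≤ q ξ := fun ξ => mul_nonneg (sq_nonneg _) (hKpos ξ).le
  -- derivative of g
  have hgderiv : ∀ ξ : ℝ, HasDerivAt g (h ξ + q ξ) ξ := by
    intro ξ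
    have hu' : HasDerivAt u (deriv u ξ) ξ := (hu ξ).hasDerivAt
    have hd : HasDerivAt (fun ξ : ℝ => ξ / 2 * (u ξ) ^ 2)
        (1 / 2 * (u ξ) ^ 2 + ξ / 2 * (2 * u ξ ^ 1 * deriv u ξ)) ξ :=
      ((hasDerivAt_id ξ).div_const 2).mul (hu'.pow 2)
    have := hd.mul (hKderiv ξ)
    refine HasDerivAt.congr_deriv (f := g) this ?_
    simp only [hhdef, hqdef, hgdef]
    ring
  -- integrability of h
  have hh : Integrable h := (h1.const_mul (1 / 2)).sub h2
  -- interval integrability of q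
  have hq : ∀ a b : ℝ, IntervalIntegrable q volume a b := by
    intro a b
    rw [intervalIntegrable_iff]
    set C : ℝ := max |a ⊓ b| |a ⊔ b| with hCdef
    have hdom : Integrable (fun ξ : ℝ => 2 * ((deriv u ξ) ^ 2 * K ξ)
        + C ^ 2 / 2 * ((u ξ) ^ 2 * K ξ)) := (h2.const_mul 2).add (h1.const_mul (C ^ 2 / 2))
    refine Integrable.mono' hdom.integrableOn ?_ ?_
    · exact ((((measurable_deriv u).add
        ((measurable_id.mul hu.continuous.measurable).div_const 2)).pow_const 2).mul
        (Real.continuous_exp.comp (by continuity)).measurable).aestronglyMeasurable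
    · rw [ae_restrict_iff' measurableSet_uIoc]
      filter_upwards with ξ hξ
      have hC : |ξ| ≤ C := abs_le_max_abs_abs hξ.1.le hξ.2
      have hC2 : ξ ^ 2 ≤ C ^ 2 := by
        rw [← sq_abs ξ]
        exact pow_le_pow_left₀ (abs_nonneg _) hC 2
      have hKp := (hKpos ξ).le
      rw [Real.norm_eq_abs, abs_of_nonneg (hqnn ξ)]
      simp only [hqdef]
      nlinarith [sq_nonneg (deriv u ξ - ξ * u ξ / 2), sq_nonneg (u ξ),
        mul_nonneg (sq_nonneg (u ξ)) hKp, mul_le_mul_of_nonneg_right hC2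
          (mul_nonneg (sq_nonneg (u ξ)) hKp)]
  -- key inequality on intervals
  have key : ∀ a b : ℝ, a ≤ b → (∫ x in a..b, h x) ≤ g b - g a := by
    intro a b hab
    have hGint : IntervalIntegrable (fun ξ => h ξ + q ξ) volume a b :=
      hh.intervalIntegrable.add (hq a b)
    have h1' : (∫ x in a..b, h x) ≤ ∫ x in a..b, (h x + q x) :=
      intervalIntegral.integral_mono_on hab hh.intervalIntegrable hGint
        (fun x _ => le_add_of_nonneg_right (hqnn x))
    have h2' : (∫ x in a..b, (h x + q x)) = g b - g a :=
      intervalIntegral.integral_eq_sub_of_hasDerivAt (fun x _ => hgderiv x) hGint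
    linarith
  -- choose good sequences
  have hBex : ∀ n : ℕ, ∃ b : ℝ, (n : ℝ) < b ∧ g b < 1 / (n + 1) := by
    intro n
    obtain ⟨b, hb1, hb2⟩ := aux_small (fun ξ => (u ξ) ^ 2 * K ξ) h1
      (by positivity : (0:ℝ) < 1 / (n + 1)) n
    exact ⟨b, hb1, by rw [hgdef]; simpa [mul_assoc] using hb2⟩
  have hAex : ∀ n : ℕ, ∃ a : ℝ, a < -(n : ℝ) ∧ -(1 / (n + 1)) < g a := by
    intro n
    have hrefl : Integrable (fun ξ : ℝ => (u (-ξ)) ^ 2 * K (-ξ)) := by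
      simpa [hKdef] using h1.comp_neg
    obtain ⟨b, hb1, hb2⟩ := aux_small (fun ξ => (u (-ξ)) ^ 2 * K (-ξ)) hrefl
      (by positivity : (0:ℝ) < 1 / (n + 1)) n
    refine ⟨-b, by linarith, ?_⟩
    have : g (-b) = -(b / 2 * ((u (-b)) ^ 2 * K (-b))) := by
      simp only [hgdef, hKdef]
      ring_nf
    rw [this]
    linarith
  choose B hB1 hB2 using hBex
  choose A hA1 hA2 using hAex
  have hAB : ∀ n : ℕ, A n ≤ B n := by
    intro n
    have h1n : A n < 0 := lt_of_lt_of_le (hA1 n) (by simp)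
    have h2n : (0:ℝ) ≤ B n := le_of_lt (lt_of_le_of_lt (Nat.cast_nonneg n) (hB1 n))
    linarith
  have hAtend : Tendsto A atTop atBot := by
    apply tendsto_atBot_mono (fun n => (hA1 n).le)
    exact tendsto_neg_atBot_iff.mpr tendsto_natCast_atTop_atTop
  have hBtend : Tendsto B atTop atTop :=
    tendsto_atTop_mono (fun n => (hB1 n).le) tendsto_natCast_atTop_atTop
  have hlim : Tendsto (fun n => ∫ x in A n..B n, h x) atTop (𝓝 (∫ x, h x)) :=
    intervalIntegral_tendsto_integral hh hAtend hBtend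
  have hsq : Tendsto (fun n : ℕ => 2 * (1 / ((n : ℝ) + 1))) atTop (𝓝 (2 * 0)) :=
    tendsto_one_div_add_atTop_nhds_zero_nat.const_mul 2
  have hineq : ∀ n : ℕ, (∫ x in A n..B n, h x) ≤ 2 * (1 / ((n : ℝ) + 1)) := by
    intro n
    have := key (A n) (B n) (hAB n)
    have := hB2 n
    have := hA2 n
    linarith
  have hfin : (∫ x, h x) ≤ 2 * 0 := le_of_tendsto_of_tendsto' hlim hsq hineq
  have hint_eq : (∫ x, h x)
      = (1 / 2) * (∫ ξ : ℝ, (u ξ) ^ 2 * K ξ) - ∫ ξ : ℝ, (deriv u ξ) ^ 2 * K ξ := by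
    rw [hhdef, integral_sub (h1.const_mul (1 / 2)) h2, integral_const_mul]
  rw [hint_eq] at hfin
  linarith
end

section
/- There exists a constant C > 0 such that for every u ∈ H¹(K), ∫_ℝ |u(ξ)|² ξ² K(ξ) dξ ≤ C ∫_ℝ |u'(ξ)|² K(ξ) dξ, where K(ξ) = exp(ξ²/4). -/
open Real MeasureTheory Filter Set Topology

lemma aux_not_tendsto_atTop_of_integrable {h : ℝ → ℝ} (hi : Integrable h) :
    ¬ Tendsto h atTop atTop := by
  intro hT
  obtain ⟨R, hR⟩ := (hT.eventually_ge_atTop 1).exists_forall_of_atTop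
  have h1 : Integrable (fun _ : ℝ => (1 : ℝ)) (volume.restrict (Ioi R)) := by
    refine (hi.integrableOn (s := Ioi R)).mono' aestronglyMeasurable_const ?_
    refine (ae_restrict_iff' measurableSet_Ioi).2 (ae_of_all _ fun x hx => ?_)
    simpa using hR x (le_of_lt hx)
  rw [integrable_const_iff] at h1
  rcases h1 with h1 | h1
  · norm_num at h1
  · have h1 := h1.measure_univ_lt_top
    simp [Measure.restrict_apply_univ, Real.volume_Ioi] at h1

lemma aux_not_tendsto_atBot_atTop_of_integrable {h : ℝ → ℝ} (hi : Integrable h) :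
    ¬ Tendsto h atBot atTop := by
  intro hT
  obtain ⟨R, hR⟩ := (hT.eventually_ge_atTop 1).exists_forall_of_atBot
  have h1 : Integrable (fun _ : ℝ => (1 : ℝ)) (volume.restrict (Iio R)) := by
    refine (hi.integrableOn (s := Iio R)).mono' aestronglyMeasurable_const ?_
    refine (ae_restrict_iff' measurableSet_Iio).2 (ae_of_all _ fun x hx => ?_)
    simpa using hR x (le_of_lt hx)
  rw [integrable_const_iff] at h1
  rcases h1 with h1 | h1
  · norm_num at h1
  · have h1 := h1.measure_univ_lt_top
    simp [Measure.restrict_apply_univ, Real.volume_Iio] at h1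

lemma aux_hasDerivAt_K (ξ : ℝ) :
    HasDerivAt (fun x : ℝ => Real.exp (x ^ 2 / 4)) (ξ / 2 * Real.exp (ξ ^ 2 / 4)) ξ := by
  have h1 : HasDerivAt (fun x : ℝ => x ^ 2 / 4) (ξ / 2) ξ := by
    have := (hasDerivAt_pow 2 ξ).div_const 4
    refine this.congr_deriv ?_
    norm_num
    ring
  have := h1.exp
  convert this using 1
  ring

/-- There is a constant `C > 0` such that for every `u ∈ H¹(K)` (with `ξ u ∈ L²(K)`),
`∫ u² ξ² K ≤ C ∫ (u')² K`, where `K(ξ) = e^{ξ²/4}`. -/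
theorem weighted_xsq_bound :
    ∃ C > (0 : ℝ), ∀ u : ℝ → ℝ, Differentiable ℝ u →
      Integrable (fun ξ : ℝ => (u ξ) ^ 2 * Real.exp (ξ ^ 2 / 4)) →
      Integrable (fun ξ : ℝ => (deriv u ξ) ^ 2 * Real.exp (ξ ^ 2 / 4)) →
      Integrable (fun ξ : ℝ => (u ξ) ^ 2 * ξ ^ 2 * Real.exp (ξ ^ 2 / 4)) →
      (∫ ξ : ℝ, (u ξ) ^ 2 * ξ ^ 2 * Real.exp (ξ ^ 2 / 4)) ≤
        C * ∫ ξ : ℝ, (deriv u ξ) ^ 2 * Real.exp (ξ ^ 2 / 4) := by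
  refine ⟨16, by norm_num, ?_⟩
  intro u hu hu2 hd2 hx2
  have hKpos : ∀ ξ : ℝ, 0 < Real.exp (ξ ^ 2 / 4) := fun ξ => Real.exp_pos _
  set g : ℝ → ℝ := fun ξ => u ξ ^ 2 * ξ * Real.exp (ξ ^ 2 / 4) with hgdef
  set φ : ℝ → ℝ := fun ξ =>
    2 * u ξ * deriv u ξ * ξ * Real.exp (ξ ^ 2 / 4) + u ξ ^ 2 * Real.exp (ξ ^ 2 / 4)
      + u ξ ^ 2 * ξ ^ 2 * Real.exp (ξ ^ 2 / 4) / 2 with hφdef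
  -- derivative of g is φ
  have hg : ∀ ξ : ℝ, HasDerivAt g (φ ξ) ξ := by
    intro ξ
    have h2 : HasDerivAt (fun x : ℝ => u x ^ 2) (2 * u ξ * deriv u ξ) ξ := by
      have := (hu ξ).hasDerivAt.pow 2
      refine this.congr_deriv ?_
      norm_num
    have h3 : HasDerivAt (fun x : ℝ => u x ^ 2 * x) (2 * u ξ * deriv u ξ * ξ + u ξ ^ 2) ξ := by
      simpa [Pi.mul_def] using h2.mul (hasDerivAt_id ξ)
    have := h3.mul (aux_hasDerivAt_K ξ)
    refine this.congr_deriv ?_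
    simp only [hφdef]
    ring
  -- integrability of the cross term
  have hmeas : AEStronglyMeasurable
      (fun ξ : ℝ => 2 * u ξ * deriv u ξ * ξ * Real.exp (ξ ^ 2 / 4)) volume := by
    apply Measurable.aestronglyMeasurable
    exact (((measurable_const.mul hu.continuous.measurable).mul (measurable_deriv u)).mul
      measurable_id).mul (by fun_prop)
  have hcross : Integrable (fun ξ : ℝ => 2 * u ξ * deriv u ξ * ξ * Real.exp (ξ ^ 2 / 4)) := by
    refine (hd2.add hx2).mono' hmeas (ae_of_all _ fun ξ => ?_)
    have key : |2 * u ξ * deriv u ξ * ξ| ≤ deriv u ξ ^ 2 + u ξ ^ 2 * ξ ^ 2 := by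
      have h := two_mul_le_add_sq (|u ξ| * |ξ|) (|deriv u ξ|)
      have heq : |2 * u ξ * deriv u ξ * ξ| = 2 * (|u ξ| * |ξ|) * |deriv u ξ| := by
        rw [abs_mul, abs_mul, abs_mul, abs_two]
        ring
      rw [heq]
      calc 2 * (|u ξ| * |ξ|) * |deriv u ξ| ≤ (|u ξ| * |ξ|) ^ 2 + |deriv u ξ| ^ 2 := h
        _ = deriv u ξ ^ 2 + u ξ ^ 2 * ξ ^ 2 := by rw [mul_pow, sq_abs, sq_abs, sq_abs]; ring
    rw [Real.norm_eq_abs, abs_mul, abs_of_pos (hKpos ξ)]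
    calc |2 * u ξ * deriv u ξ * ξ| * Real.exp (ξ ^ 2 / 4)
        ≤ (deriv u ξ ^ 2 + u ξ ^ 2 * ξ ^ 2) * Real.exp (ξ ^ 2 / 4) :=
          mul_le_mul_of_nonneg_right key (hKpos ξ).le
      _ = deriv u ξ ^ 2 * Real.exp (ξ ^ 2 / 4) + u ξ ^ 2 * ξ ^ 2 * Real.exp (ξ ^ 2 / 4) := by
          ring
  have hφ : Integrable φ := (hcross.add hu2).add (hx2.div_const 2)
  -- limits of g at ±∞ are 0
  have hgT : Tendsto g atTop (𝓝 (limUnder atTop g)) :=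
    tendsto_limUnder_of_hasDerivAt_of_integrableOn_Ioi (a := 0) (fun x _ => hg x)
      hφ.integrableOn
  have hgB : Tendsto g atBot (𝓝 (limUnder atBot g)) :=
    tendsto_limUnder_of_hasDerivAt_of_integrableOn_Iic (a := 0) (fun x _ => hg x)
      hφ.integrableOn
  have heqmul : (fun ξ : ℝ => g ξ * ξ)
      = fun ξ : ℝ => u ξ ^ 2 * ξ ^ 2 * Real.exp (ξ ^ 2 / 4) := by
    funext ξ; simp only [hgdef]; ring
  have hLT : limUnder atTop g = 0 := by
    have hL0 : 0 ≤ limUnder atTop g := by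
      refine ge_of_tendsto hgT ?_
      filter_upwards [eventually_ge_atTop (0 : ℝ)] with ξ hξ
      exact mul_nonneg (mul_nonneg (sq_nonneg _) hξ) (hKpos ξ).le
    rcases hL0.lt_or_eq with hL | hL
    · exfalso
      have hmul : Tendsto (fun ξ : ℝ => g ξ * ξ) atTop atTop :=
        Filter.Tendsto.pos_mul_atTop hL hgT tendsto_id
      rw [heqmul] at hmul
      exact aux_not_tendsto_atTop_of_integrable hx2 hmul
    · exact hL.symm
  have hLB : limUnder atBot g = 0 := by
    have hL0 : limUnder atBot g ≤ 0 := by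
      refine le_of_tendsto hgB ?_
      filter_upwards [eventually_le_atBot (0 : ℝ)] with ξ hξ
      have h1 : u ξ ^ 2 * ξ * Real.exp (ξ ^ 2 / 4)
          = (u ξ ^ 2 * Real.exp (ξ ^ 2 / 4)) * ξ := by ring
      show u ξ ^ 2 * ξ * Real.exp (ξ ^ 2 / 4) ≤ 0
      rw [h1]
      exact mul_nonpos_of_nonneg_of_nonpos (by positivity) hξ
    rcases hL0.lt_or_eq with hL | hL
    · exfalso
      have hmul : Tendsto (fun ξ : ℝ => g ξ * ξ) atBot atTop :=
        Filter.Tendsto.neg_mul_atBot hL hgB tendsto_id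
      rw [heqmul] at hmul
      exact aux_not_tendsto_atBot_atTop_of_integrable hx2 hmul
    · exact hL
  -- integration by parts: ∫ φ = 0
  have hIoi : ∫ ξ in Ioi (0 : ℝ), φ ξ = 0 - g 0 :=
    integral_Ioi_of_hasDerivAt_of_tendsto' (fun x _ => hg x) hφ.integrableOn (hLT ▸ hgT)
  have hIic : ∫ ξ in Iic (0 : ℝ), φ ξ = g 0 - 0 :=
    integral_Iic_of_hasDerivAt_of_tendsto' (fun x _ => hg x) hφ.integrableOn (hLB ▸ hgB)
  have hsum : ∫ ξ : ℝ, φ ξ = 0 := by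
    rw [← intervalIntegral.integral_Iic_add_Ioi hφ.integrableOn hφ.integrableOn, hIoi, hIic]
    ring
  have hφint : ∫ ξ : ℝ, φ ξ
      = (∫ ξ : ℝ, 2 * u ξ * deriv u ξ * ξ * Real.exp (ξ ^ 2 / 4))
        + (∫ ξ : ℝ, u ξ ^ 2 * Real.exp (ξ ^ 2 / 4))
        + (∫ ξ : ℝ, u ξ ^ 2 * ξ ^ 2 * Real.exp (ξ ^ 2 / 4)) / 2 := by
    have hAB : Integrable (fun ξ : ℝ =>
        2 * u ξ * deriv u ξ * ξ * Real.exp (ξ ^ 2 / 4) + u ξ ^ 2 * Real.exp (ξ ^ 2 / 4)) :=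
      hcross.add hu2
    simp only [hφdef]
    rw [integral_add hAB (hx2.div_const 2), integral_add hcross hu2, integral_div]
  have hI : (∫ ξ : ℝ, 2 * u ξ * deriv u ξ * ξ * Real.exp (ξ ^ 2 / 4))
        + (∫ ξ : ℝ, u ξ ^ 2 * Real.exp (ξ ^ 2 / 4))
        + (∫ ξ : ℝ, u ξ ^ 2 * ξ ^ 2 * Real.exp (ξ ^ 2 / 4)) / 2 = 0 := by
    rw [← hφint]; exact hsum
  -- the quadratic inequality
  have hq : 0 ≤ (∫ ξ : ℝ, deriv u ξ ^ 2 * Real.exp (ξ ^ 2 / 4))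
        + (∫ ξ : ℝ, 2 * u ξ * deriv u ξ * ξ * Real.exp (ξ ^ 2 / 4)) / 4
        + (∫ ξ : ℝ, u ξ ^ 2 * ξ ^ 2 * Real.exp (ξ ^ 2 / 4)) / 16 := by
    have h0 : 0 ≤ ∫ ξ : ℝ, (deriv u ξ + ξ * u ξ / 4) ^ 2 * Real.exp (ξ ^ 2 / 4) :=
      integral_nonneg fun ξ => mul_nonneg (sq_nonneg _) (hKpos ξ).le
    have hexp : (fun ξ : ℝ => (deriv u ξ + ξ * u ξ / 4) ^ 2 * Real.exp (ξ ^ 2 / 4))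
        = fun ξ : ℝ => deriv u ξ ^ 2 * Real.exp (ξ ^ 2 / 4)
            + 2 * u ξ * deriv u ξ * ξ * Real.exp (ξ ^ 2 / 4) / 4
            + u ξ ^ 2 * ξ ^ 2 * Real.exp (ξ ^ 2 / 4) / 16 := by
      funext ξ; ring
    rw [hexp] at h0
    have hAB : Integrable (fun ξ : ℝ =>
        deriv u ξ ^ 2 * Real.exp (ξ ^ 2 / 4)
          + 2 * u ξ * deriv u ξ * ξ * Real.exp (ξ ^ 2 / 4) / 4) :=
      hd2.add (hcross.div_const 4)
    rw [integral_add hAB (hx2.div_const 16), integral_add hd2 (hcross.div_const 4),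
      integral_div, integral_div] at h0
    exact h0
  have hE0 : 0 ≤ ∫ ξ : ℝ, u ξ ^ 2 * Real.exp (ξ ^ 2 / 4) :=
    integral_nonneg fun ξ => mul_nonneg (sq_nonneg _) (hKpos ξ).le
  linarith
end

section
/- If u ∈ H¹(K) with K(ξ) = exp(ξ²/4), then K^{1/2} u is (essentially) bounded on ℝ; that is, K^{1/2} u ∈ L^∞(ℝ), with a bound depending only on ‖u‖_{H¹(K)}. -/
open Real MeasureTheory

lemma wse_right_bound (u : ℝ → ℝ) (hu : Differentiable ℝ u)
    (h1 : Integrable (fun ξ : ℝ => (u ξ) ^ 2 * Real.exp (ξ ^ 2 / 4)))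
    (h2 : Integrable (fun ξ : ℝ => (deriv u ξ) ^ 2 * Real.exp (ξ ^ 2 / 4)))
    {ξ : ℝ} (hξ : 0 ≤ ξ) :
    (u ξ) ^ 2 * Real.exp (ξ ^ 2 / 4) ≤
      (∫ x : ℝ, (u x) ^ 2 * Real.exp (x ^ 2 / 4)) +
        ∫ x : ℝ, (deriv u x) ^ 2 * Real.exp (x ^ 2 / 4) := by
  set F : ℝ → ℝ := fun x => (u x) ^ 2 * Real.exp (x ^ 2 / 4) with hF
  set G1 : ℝ → ℝ := fun x => (2 * u x * deriv u x) * Real.exp (x ^ 2 / 4) with hG1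
  set G2 : ℝ → ℝ := fun x => (u x) ^ 2 * (Real.exp (x ^ 2 / 4) * (x / 2)) with hG2
  set S : ℝ → ℝ := fun x => (u x) ^ 2 * Real.exp (x ^ 2 / 4)
      + (deriv u x) ^ 2 * Real.exp (x ^ 2 / 4) with hS
  have hSint : Integrable S := h1.add h2
  have hSnn : ∀ x, 0 ≤ S x := by
    intro x
    have := Real.exp_pos (x ^ 2 / 4)
    positivity
  -- derivative of F
  have hFderiv : ∀ x : ℝ, HasDerivAt F (G1 x + G2 x) x := by
    intro x
    have hx2 : HasDerivAt (fun x : ℝ => x ^ 2 / 4) (x / 2) x := by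
      have := (hasDerivAt_pow 2 x).div_const 4
      exact this.congr_deriv (by norm_num; ring)
    have hexp : HasDerivAt (fun x : ℝ => Real.exp (x ^ 2 / 4))
        (Real.exp (x ^ 2 / 4) * (x / 2)) x := hx2.exp
    have hu2 : HasDerivAt (fun x : ℝ => (u x) ^ 2) (2 * u x * deriv u x) x := by
      have := ((hu x).hasDerivAt).pow 2
      exact this.congr_deriv (by simp)
    exact hu2.mul hexp
  -- G1 is integrable (dominated by S)
  have hG1meas : AEStronglyMeasurable G1 (volume : Measure ℝ) := by
    have : Measurable G1 := by
      apply Measurable.mul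
      · exact (measurable_const.mul hu.continuous.measurable).mul (measurable_deriv u)
      · exact (Real.continuous_exp.comp (by continuity)).measurable
    exact this.aestronglyMeasurable
  have hG1le : ∀ x, |G1 x| ≤ S x := by
    intro x
    have he : (0:ℝ) < Real.exp (x ^ 2 / 4) := Real.exp_pos _
    have habs : |G1 x| = |2 * u x * deriv u x| * Real.exp (x ^ 2 / 4) := by
      rw [hG1, abs_mul, abs_of_pos he]
    rw [habs]
    have h2ab : |2 * u x * deriv u x| ≤ (u x) ^ 2 + (deriv u x) ^ 2 := by
      have := abs_mul (u x) (deriv u x)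
      have h := two_mul_le_add_sq (|u x|) (|deriv u x|)
      calc |2 * u x * deriv u x| = 2 * |u x| * |deriv u x| := by
            rw [mul_assoc, abs_mul, abs_mul]; simp [abs_of_nonneg, mul_assoc]
        _ ≤ |u x| ^ 2 + |deriv u x| ^ 2 := two_mul_le_add_sq _ _
        _ = (u x) ^ 2 + (deriv u x) ^ 2 := by rw [sq_abs, sq_abs]
    have := mul_le_mul_of_nonneg_right h2ab he.le
    calc |2 * u x * deriv u x| * Real.exp (x ^ 2 / 4)
        ≤ ((u x) ^ 2 + (deriv u x) ^ 2) * Real.exp (x ^ 2 / 4) := this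
      _ = S x := by rw [hS]; ring
  have hG1int : Integrable G1 := by
    refine hSint.mono hG1meas (Filter.Eventually.of_forall fun x => ?_)
    rw [Real.norm_eq_abs, Real.norm_eq_abs, abs_of_nonneg (hSnn x)]
    exact hG1le x
  -- main estimate: for every ε > 0, F ξ ≤ (I₁ + I₂) + ε
  set I : ℝ := (∫ x : ℝ, (u x) ^ 2 * Real.exp (x ^ 2 / 4)) +
      ∫ x : ℝ, (deriv u x) ^ 2 * Real.exp (x ^ 2 / 4) with hI
  have hIint : I = ∫ x : ℝ, S x := by
    rw [hI, hS, ← integral_add h1 h2]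
  refine le_of_forall_pos_le_add ?_
  intro ε hε
  -- find b > ξ with F b < ε
  obtain ⟨b, hbξ, hFb⟩ : ∃ b, ξ < b ∧ F b < ε := by
    by_contra h
    push_neg at h
    have hsub : Set.Ioi ξ ⊆ {x | ε ≤ F x} := fun x hx => (h x hx)
    have hlt : (volume : Measure ℝ) {x | ε ≤ F x} < ⊤ := h1.measure_ge_lt_top hε
    have := measure_mono hsub (μ := (volume : Measure ℝ))
    rw [Real.volume_Ioi] at this
    exact absurd (this.trans_lt hlt) (lt_irrefl _)
  have hbξ' : ξ ≤ b := hbξ.le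
  -- FTC
  have hG2cont : Continuous G2 := by
    apply Continuous.mul
    · exact (hu.continuous.pow 2)
    · exact (Real.continuous_exp.comp (by continuity)).mul (by continuity)
  have hG1ii : IntervalIntegrable G1 volume ξ b := hG1int.intervalIntegrable
  have hG2ii : IntervalIntegrable G2 volume ξ b := hG2cont.intervalIntegrable _ _
  have hftc : ∫ x in ξ..b, (G1 x + G2 x) = F b - F ξ :=
    intervalIntegral.integral_eq_sub_of_hasDerivAt (fun x _ => hFderiv x) (hG1ii.add hG2ii)
  rw [intervalIntegral.integral_add hG1ii hG2ii] at hftc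
  -- second term nonneg
  have hG2nn : 0 ≤ ∫ x in ξ..b, G2 x := by
    apply intervalIntegral.integral_nonneg hbξ'
    intro x hx
    have hx0 : 0 ≤ x := le_trans hξ hx.1
    have := (Real.exp_pos (x ^ 2 / 4)).le
    rw [hG2]
    positivity
  -- first term bounded
  have hG1bound : -(∫ x in ξ..b, G1 x) ≤ I := by
    have h1' : -(∫ x in ξ..b, G1 x) ≤ |∫ x in ξ..b, G1 x| := neg_le_abs _
    have h2' : |∫ x in ξ..b, G1 x| ≤ ∫ x in ξ..b, |G1 x| :=
      intervalIntegral.abs_integral_le_integral_abs hbξ'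
    have h3' : ∫ x in ξ..b, |G1 x| ≤ ∫ x in ξ..b, S x := by
      apply intervalIntegral.integral_mono_on hbξ' hG1ii.abs hSint.intervalIntegrable
      intro x _
      exact hG1le x
    have h4' : ∫ x in ξ..b, S x ≤ ∫ x : ℝ, S x := by
      rw [intervalIntegral.integral_of_le hbξ']
      exact setIntegral_le_integral hSint
        (Filter.Eventually.of_forall fun x => hSnn x)
    rw [hIint]
    exact h1'.trans (h2'.trans (h3'.trans h4'))
  -- combine
  have : F ξ = F b - (∫ x in ξ..b, G1 x) - ∫ x in ξ..b, G2 x := by linarith [hftc]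
  have : F ξ ≤ F b + I := by linarith [hG2nn, hG1bound]
  have : F ξ ≤ I + ε := by linarith [hFb.le]
  exact this

/-- If `u ∈ H¹(K)` with `K(ξ) = e^{ξ²/4}`, then `K^{1/2} u` is bounded:
`sup_ξ |e^{ξ²/8} u(ξ)| ≤ C ‖u‖_{H¹(K)}` for an absolute constant `C`. -/
theorem weighted_sobolev_embedding_Linfty :
    ∃ C > (0 : ℝ), ∀ u : ℝ → ℝ, Differentiable ℝ u →
      Integrable (fun ξ : ℝ => (u ξ) ^ 2 * Real.exp (ξ ^ 2 / 4)) →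
      Integrable (fun ξ : ℝ => (deriv u ξ) ^ 2 * Real.exp (ξ ^ 2 / 4)) →
      ∀ ξ : ℝ, |Real.exp (ξ ^ 2 / 8) * u ξ| ≤
        C * Real.sqrt ((∫ x : ℝ, (u x) ^ 2 * Real.exp (x ^ 2 / 4)) +
          ∫ x : ℝ, (deriv u x) ^ 2 * Real.exp (x ^ 2 / 4)) := by
  refine ⟨1, one_pos, fun u hu h1 h2 ξ => ?_⟩
  set I : ℝ := (∫ x : ℝ, (u x) ^ 2 * Real.exp (x ^ 2 / 4)) +
      ∫ x : ℝ, (deriv u x) ^ 2 * Real.exp (x ^ 2 / 4) with hI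
  have key : (u ξ) ^ 2 * Real.exp (ξ ^ 2 / 4) ≤ I := by
    rcases le_total 0 ξ with hξ | hξ
    · exact wse_right_bound u hu h1 h2 hξ
    · -- reflect
      set v : ℝ → ℝ := fun x => u (-x) with hv
      have hvdiff : Differentiable ℝ v := hu.comp differentiable_neg
      have hveq : (fun x : ℝ => (v x) ^ 2 * Real.exp (x ^ 2 / 4)) =
          (fun y : ℝ => (u y) ^ 2 * Real.exp (y ^ 2 / 4)) ∘ (fun x : ℝ => -x) := by
        funext x; simp [hv, Function.comp, neg_sq]
      have hvdeq : (fun x : ℝ => (deriv v x) ^ 2 * Real.exp (x ^ 2 / 4)) =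
          (fun y : ℝ => (deriv u y) ^ 2 * Real.exp (y ^ 2 / 4)) ∘ (fun x : ℝ => -x) := by
        funext x
        simp only [Function.comp]
        rw [hv, deriv_comp_neg, neg_sq, neg_sq]
      have hemb : MeasurableEmbedding (fun x : ℝ => -x) :=
        (Homeomorph.neg ℝ).isClosedEmbedding.measurableEmbedding
      have hmp := Measure.measurePreserving_neg (volume : Measure ℝ)
      have h1v : Integrable (fun x : ℝ => (v x) ^ 2 * Real.exp (x ^ 2 / 4)) := by
        rw [hveq]
        exact (hmp.integrable_comp_emb hemb).mpr h1
      have h2v : Integrable (fun x : ℝ => (deriv v x) ^ 2 * Real.exp (x ^ 2 / 4)) := by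
        rw [hvdeq]
        exact (hmp.integrable_comp_emb hemb).mpr h2
      have hbound := wse_right_bound v hvdiff h1v h2v (neg_nonneg.mpr hξ)
      have hI1 : (∫ x : ℝ, (v x) ^ 2 * Real.exp (x ^ 2 / 4)) =
          ∫ x : ℝ, (u x) ^ 2 * Real.exp (x ^ 2 / 4) := by
        rw [hveq]
        exact integral_neg_eq_self (fun y : ℝ => (u y) ^ 2 * Real.exp (y ^ 2 / 4)) volume
      have hI2 : (∫ x : ℝ, (deriv v x) ^ 2 * Real.exp (x ^ 2 / 4)) =
          ∫ x : ℝ, (deriv u x) ^ 2 * Real.exp (x ^ 2 / 4) := by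
        rw [hvdeq]
        exact integral_neg_eq_self (fun y : ℝ => (deriv u y) ^ 2 * Real.exp (y ^ 2 / 4)) volume
      have hval : (v (-ξ)) ^ 2 * Real.exp ((-ξ) ^ 2 / 4) =
          (u ξ) ^ 2 * Real.exp (ξ ^ 2 / 4) := by
        simp [hv, neg_sq]
      rw [hval, hI1, hI2] at hbound
      exact hbound
  have hInn : 0 ≤ I := le_trans (by positivity) key
  have heq : |Real.exp (ξ ^ 2 / 8) * u ξ| =
      Real.sqrt ((u ξ) ^ 2 * Real.exp (ξ ^ 2 / 4)) := by
    rw [← Real.sqrt_sq_eq_abs]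
    congr 1
    rw [mul_pow, ← Real.exp_nat_mul]
    ring_nf
  rw [heq, one_mul]
  exact Real.sqrt_le_sqrt key
end

section
/- Negativity of ℒ on the stable subspace: for every u ∈ H²(K) with ∫_ℝ u(ξ) dξ = 0, the inner product ⟨ℒu, u⟩ in L²(K) satisfies ⟨ℒu, u⟩ ≤ −(1/2)‖u‖²_{H¹(K)}, where ℒu = u'' + (1/2)ξ u' + (1/2)u, K(ξ) = exp(ξ²/4), and ‖u‖²_{H¹(K)} = ‖u‖²_{L²(K)} + ‖u'‖²_{L²(K)} (or the equivalent norm ‖u'‖²_{L²(K)}). -/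
open Real MeasureTheory Filter Set Topology

namespace LNegAux

/-- Cauchy–Schwarz for integrals. -/
lemma cs_integral (μ : Measure ℝ) (a b : ℝ → ℝ)
    (ha : Integrable (fun x => a x ^ 2) μ) (hb : Integrable (fun x => b x ^ 2) μ)
    (hab : Integrable (fun x => a x * b x) μ) :
    (∫ x, a x * b x ∂μ) ^ 2 ≤ (∫ x, a x ^ 2 ∂μ) * (∫ x, b x ^ 2 ∂μ) := by
  have key : ∀ t : ℝ, 0 ≤ (∫ x, a x ^ 2 ∂μ) * (t * t) +
      (2 * ∫ x, a x * b x ∂μ) * t + (∫ x, b x ^ 2 ∂μ) := by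
    intro t
    have h0 : 0 ≤ ∫ x, (t * a x + b x) ^ 2 ∂μ := integral_nonneg fun x => sq_nonneg _
    have hexp : (fun x => (t * a x + b x) ^ 2)
        = fun x => (t * t) * (a x ^ 2) + (2 * t) * (a x * b x) + b x ^ 2 := by
      funext x; ring
    rw [hexp] at h0
    have hI1 : Integrable (fun x => (t * t) * (a x ^ 2) + (2 * t) * (a x * b x)) μ :=
      (ha.const_mul (t*t)).add (hab.const_mul (2*t))
    rw [integral_add hI1 hb, integral_add (ha.const_mul (t*t)) (hab.const_mul (2*t)),
      integral_const_mul, integral_const_mul] at h0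
    linarith
  have hd := discrim_le_zero key
  rw [discrim] at hd
  nlinarith [hd]


/-- An integrable function cannot eventually dominate `ε/x`. -/
lemma freq_small (ψ : ℝ → ℝ) (hnn : ∀ x, 1 ≤ x → 0 ≤ ψ x)
    (hint : IntegrableOn (fun x => ψ x / x) (Ioi 1)) :
    ∀ ε > 0, ∃ᶠ x in atTop, ψ x < ε := by
  intro ε hε
  by_contra hc
  rw [not_frequently] at hc
  obtain ⟨N, hN⟩ := eventually_atTop.1 hc
  set M := max N 1 with hM
  have h1M : (1:ℝ) ≤ M := le_max_right _ _
  have h0M : (0:ℝ) < M := lt_of_lt_of_le zero_lt_one h1M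
  have hint2 : IntegrableOn (fun x => ε / x) (Ioi M) := by
    refine Integrable.mono' ((hint.mono_set (Ioi_subset_Ioi h1M))) ?_ ?_
    · exact (measurable_const.div measurable_id).aestronglyMeasurable
    · filter_upwards [ae_restrict_mem measurableSet_Ioi] with x hx
      have hx1 : (1:ℝ) < x := lt_of_le_of_lt h1M hx
      have hx0 : (0:ℝ) < x := lt_trans zero_lt_one hx1
      have hψ : ε ≤ ψ x := by
        have := hN x (le_trans (le_max_left N 1) (le_of_lt hx))
        simpa using not_lt.mp this
      rw [Real.norm_eq_abs, abs_of_nonneg (by positivity)]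
      gcongr
  have hnot : ¬ IntegrableOn (fun x => ε / x) (Ioi M) := by
    intro h
    have h' : IntegrableOn (fun x : ℝ => x ^ (-1:ℝ)) (Ioi M) := by
      have h2 := h.const_mul ε⁻¹
      refine (integrable_congr ?_).mp h2
      filter_upwards [ae_restrict_mem measurableSet_Ioi] with x hx
      have hx0 : (0:ℝ) < x := lt_trans h0M hx
      rw [Real.rpow_neg_one]
      field_simp
    rw [integrableOn_Ioi_rpow_iff h0M] at h'
    linarith
  exact hnot hint2

/-- Gaussian tail estimate. -/
lemma gauss_integral_tail {R : ℝ} (hR : 1 ≤ R) :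
    ∫ t in Ioi R, Real.exp (-t ^ 2 / 4) ≤ 2 / R * Real.exp (-R ^ 2 / 4) := by
  have hR0 : (0:ℝ) < R := lt_of_lt_of_le zero_lt_one hR
  have hderiv : ∀ x ∈ Ici R, HasDerivAt (fun t : ℝ => -2 * Real.exp (-t ^ 2 / 4))
      (x * Real.exp (-x ^ 2 / 4)) x := by
    intro x _
    have h1 : HasDerivAt (fun t : ℝ => -t ^ 2 / 4) (-(2 * x ^ 1) / 4) x :=
      ((hasDerivAt_pow 2 x).neg.div_const 4)
    have h2 := h1.exp.const_mul (-2 : ℝ)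
    refine h2.congr_deriv ?_
    ring
  have hpos : ∀ x ∈ Ioi R, 0 ≤ x * Real.exp (-x ^ 2 / 4) := by
    intro x hx
    have : (0:ℝ) < x := lt_trans hR0 hx
    positivity
  have htend : Tendsto (fun t : ℝ => -2 * Real.exp (-t ^ 2 / 4)) atTop (𝓝 0) := by
    have h1 : Tendsto (fun t : ℝ => -t ^ 2 / 4) atTop atBot := by
      apply Tendsto.atBot_div_const (by norm_num)
      have hsq : Tendsto (fun t : ℝ => t ^ 2) atTop atTop := tendsto_pow_atTop two_ne_zero
      have : Tendsto (fun t : ℝ => -(t ^ 2)) atTop atBot := tendsto_neg_atBot_iff.mpr hsq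
      exact this.congr fun t => by ring
    have := (Real.tendsto_exp_atBot.comp h1).const_mul (-2:ℝ)
    simpa using this
  have hval := integral_Ioi_of_hasDerivAt_of_nonneg' hderiv hpos htend
  have hintd : IntegrableOn (fun x : ℝ => x * Real.exp (-x ^ 2 / 4)) (Ioi R) :=
    integrableOn_Ioi_deriv_of_nonneg' hderiv hpos htend
  have hint1 : IntegrableOn (fun t : ℝ => Real.exp (-t ^ 2 / 4)) (Ioi R) := by
    have h0 : Integrable (fun t : ℝ => Real.exp (-(1/4 : ℝ) * t ^ 2)) :=
      integrable_exp_neg_mul_sq (by norm_num)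
    have : (fun t : ℝ => Real.exp (-(1/4 : ℝ) * t ^ 2)) = fun t : ℝ => Real.exp (-t ^ 2 / 4) := by
      funext t; ring_nf
    rw [this] at h0
    exact h0.integrableOn
  have hmono : ∫ t in Ioi R, Real.exp (-t ^ 2 / 4)
      ≤ ∫ t in Ioi R, t / R * Real.exp (-t ^ 2 / 4) := by
    have hg2 : IntegrableOn (fun t : ℝ => t / R * Real.exp (-t ^ 2 / 4)) (Ioi R) := by
      refine (hintd.div_const R).congr ?_
      exact Eventually.of_forall fun x => by ring
    apply setIntegral_mono_on hint1 hg2 measurableSet_Ioi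
    intro x hx
    have hx0 : R < x := hx
    have h1 : (1:ℝ) ≤ x / R := (one_le_div hR0).mpr (le_of_lt hx0)
    nlinarith [Real.exp_pos (-x ^ 2 / 4)]
  calc ∫ t in Ioi R, Real.exp (-t ^ 2 / 4) ≤ ∫ t in Ioi R, t / R * Real.exp (-t ^ 2 / 4) := hmono
    _ = (1/R) * ∫ t in Ioi R, t * Real.exp (-t ^ 2 / 4) := by
        rw [← integral_const_mul]
        apply setIntegral_congr_fun measurableSet_Ioi
        intro x _; ring
    _ = 2 / R * Real.exp (-R ^ 2 / 4) := by
        rw [hval]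
        ring

/-- Right tails of integrable functions tend to zero. -/
lemma tail_tendsto_right {h : ℝ → ℝ} (hint : Integrable h) :
    Tendsto (fun R : ℝ => ∫ x in Ioi R, h x) atTop (𝓝 0) := by
  have key : Tendsto (fun R : ℝ => ∫ x, (Ioi R).indicator h x) atTop (𝓝 (∫ x : ℝ, (0:ℝ))) := by
    apply tendsto_integral_filter_of_dominated_convergence (fun x => |h x|)
    · exact Eventually.of_forall fun R => hint.aestronglyMeasurable.indicator measurableSet_Ioi
    · refine Eventually.of_forall fun R => Eventually.of_forall fun x => ?_
      simpa using norm_indicator_le_norm_self (f := h) x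
    · exact hint.abs
    · refine Eventually.of_forall fun x => ?_
      refine Tendsto.congr' ?_ tendsto_const_nhds
      filter_upwards [eventually_ge_atTop x] with R hR
      exact (indicator_of_notMem (by simpa using hR) h).symm
  simp only [integral_zero] at key
  refine key.congr fun R => ?_
  exact integral_indicator measurableSet_Ioi

/-- Left tails of integrable functions tend to zero. -/
lemma tail_tendsto_left {h : ℝ → ℝ} (hint : Integrable h) :
    Tendsto (fun R : ℝ => ∫ x in Iio (-R), h x) atTop (𝓝 0) := by
  have key : Tendsto (fun R : ℝ => ∫ x, (Iio (-R)).indicator h x) atTop (𝓝 (∫ x : ℝ, (0:ℝ))) := by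
    apply tendsto_integral_filter_of_dominated_convergence (fun x => |h x|)
    · exact Eventually.of_forall fun R => hint.aestronglyMeasurable.indicator measurableSet_Iio
    · refine Eventually.of_forall fun R => Eventually.of_forall fun x => ?_
      simpa using norm_indicator_le_norm_self (f := h) x
    · exact hint.abs
    · refine Eventually.of_forall fun x => ?_
      refine Tendsto.congr' ?_ tendsto_const_nhds
      filter_upwards [eventually_ge_atTop (-x)] with R hR
      refine (indicator_of_notMem ?_ h).symm
      simp only [mem_Iio, not_lt]
      linarith
  simp only [integral_zero] at key
  refine key.congr fun R => ?_
  exact integral_indicator measurableSet_Iio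


section Key

set_option maxHeartbeats 1000000 in
/-- The sharp weighted Poincaré inequality on the stable subspace. -/
lemma key_P_le_D (u : ℝ → ℝ) (hu : ContDiff ℝ 2 u)
    (hint : Integrable u) (hmean : (∫ ξ : ℝ, u ξ) = 0)
    (h1 : Integrable fun ξ : ℝ => (u ξ) ^ 2 * Real.exp (ξ ^ 2 / 4))
    (h2 : Integrable fun ξ : ℝ => (deriv u ξ) ^ 2 * Real.exp (ξ ^ 2 / 4)) :
    (∫ ξ : ℝ, (u ξ) ^ 2 * Real.exp (ξ ^ 2 / 4))
      ≤ ∫ ξ : ℝ, (deriv u ξ) ^ 2 * Real.exp (ξ ^ 2 / 4) := by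
  -- abbreviations
  set Kf : ℝ → ℝ := fun x => Real.exp (x ^ 2 / 4) with hKf
  set P : ℝ := ∫ ξ : ℝ, (u ξ) ^ 2 * Kf ξ with hP
  set D : ℝ := ∫ ξ : ℝ, (deriv u ξ) ^ 2 * Kf ξ with hD
  have hPnn : 0 ≤ P := integral_nonneg fun x => by positivity
  have hDnn : 0 ≤ D := integral_nonneg fun x => by positivity
  -- smoothness facts
  have hu2 : ContDiff ℝ (1 + 1) u := by
    have he : ((1 : WithTop ℕ∞) + 1) = 2 := by norm_num
    rw [he]
    exact hu
  rw [contDiff_succ_iff_deriv] at hu2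
  obtain ⟨hdiffu, -, hu1⟩ := hu2
  have hcu : Continuous u := hdiffu.continuous
  obtain ⟨hdiffu', hcu''⟩ := contDiff_one_iff_deriv.mp hu1
  have hcu' : Continuous (deriv u) := hdiffu'.continuous
  have hud : ∀ x : ℝ, HasDerivAt u (deriv u x) x := fun x => (hdiffu x).hasDerivAt
  have hu'd : ∀ x : ℝ, HasDerivAt (deriv u) (deriv (deriv u) x) x :=
    fun x => (hdiffu' x).hasDerivAt
  have hcK : Continuous Kf := Real.continuous_exp.comp ((continuous_pow 2).div_const 4)
  have hKd : ∀ x : ℝ, HasDerivAt Kf (x / 2 * Kf x) x := by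
    intro x
    have hq : HasDerivAt (fun y : ℝ => y ^ 2 / 4) ((2 : ℕ) * x ^ 1 / 4) x :=
      (hasDerivAt_pow 2 x).div_const 4
    have := hq.exp
    rw [hKf]
    convert this using 1
    ring
  -- the antiderivative F
  set F : ℝ → ℝ := fun x => ∫ t in Iic x, u t with hFdef
  have hFd : ∀ x : ℝ, HasDerivAt F (u x) x := by
    intro x
    have h0 : ∀ y : ℝ, F y = (∫ t in Iic 0, u t) + ∫ t in (0:ℝ)..y, u t := by
      intro y
      have := intervalIntegral.integral_Iic_sub_Iic (hint.integrableOn) (hint.integrableOn) (a := (0:ℝ)) (b := y)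
      rw [hFdef]
      dsimp only
      linarith [this]
    have hd2 : HasDerivAt (fun y => (∫ t in Iic 0, u t) + ∫ t in (0:ℝ)..y, u t) (u x) x := by
      refine HasDerivAt.const_add _ ?_
      exact intervalIntegral.integral_hasDerivAt_right hint.intervalIntegrable
        hcu.stronglyMeasurable.stronglyMeasurableAtFilter hcu.continuousAt
    exact (funext h0 ▸ hd2 : HasDerivAt F (u x) x)
  have hcF : Continuous F := by
    have : Differentiable ℝ F := fun x => (hFd x).differentiableAt
    exact this.continuous
  -- tails
  have hTpnn : ∀ R : ℝ, 0 ≤ ∫ x in Ioi R, (u x) ^ 2 * Kf x :=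
    fun R => setIntegral_nonneg measurableSet_Ioi fun x _ => by positivity
  have hTmnn : ∀ R : ℝ, 0 ≤ ∫ x in Iio (-R), (u x) ^ 2 * Kf x :=
    fun R => setIntegral_nonneg measurableSet_Iio fun x _ => by positivity
  -- F bounds at ±R
  have hgauss_int : Integrable (fun t : ℝ => Real.exp (-t ^ 2 / 4)) := by
    have h0 : Integrable (fun t : ℝ => Real.exp (-(1/4 : ℝ) * t ^ 2)) :=
      integrable_exp_neg_mul_sq (by norm_num)
    have heq : (fun t : ℝ => Real.exp (-(1/4 : ℝ) * t ^ 2)) = fun t : ℝ => Real.exp (-t ^ 2 / 4) := by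
      funext t; ring_nf
    rwa [heq] at h0
  have hexp8 : ∀ x : ℝ, Real.exp (x ^ 2 / 8) * Real.exp (x ^ 2 / 8) = Kf x := by
    intro x
    rw [← Real.exp_add, hKf, show x ^ 2 / 8 + x ^ 2 / 8 = x ^ 2 / 4 by ring]
  have hexp8' : ∀ x : ℝ, Real.exp (x ^ 2 / 8) * Real.exp (-x ^ 2 / 8) = 1 := by
    intro x
    rw [← Real.exp_add, show x ^ 2 / 8 + -x ^ 2 / 8 = (0:ℝ) by ring, Real.exp_zero]
  have hexp8m : ∀ x : ℝ, Real.exp (-x ^ 2 / 8) * Real.exp (-x ^ 2 / 8) = Real.exp (-x ^ 2 / 4) := by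
    intro x
    rw [← Real.exp_add, show -x ^ 2 / 8 + -x ^ 2 / 8 = -x ^ 2 / 4 by ring]
  have hKinv : ∀ x : ℝ, Real.exp (-x ^ 2 / 4) * Kf x = 1 := by
    intro x
    rw [hKf, ← Real.exp_add, show -x ^ 2 / 4 + x ^ 2 / 4 = (0:ℝ) by ring, Real.exp_zero]
  have hKsymm : ∀ R : ℝ, Kf (-R) = Kf R := by
    intro R
    rw [hKf]
    simp [neg_sq]
  -- pointwise rewrite helpers for Cauchy-Schwarz
  have e1 : ∀ t : ℝ, (u t * Real.exp (t ^ 2 / 8)) * Real.exp (-t ^ 2 / 8) = u t := by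
    intro t; rw [mul_assoc, hexp8' t, mul_one]
  have e2 : ∀ t : ℝ, (u t * Real.exp (t ^ 2 / 8)) ^ 2 = u t ^ 2 * Kf t := by
    intro t; rw [mul_pow, pow_two (Real.exp _), hexp8 t]
  have e3 : ∀ t : ℝ, (Real.exp (-t ^ 2 / 8)) ^ 2 = Real.exp (-t ^ 2 / 4) := by
    intro t; rw [pow_two, hexp8m t]
  -- F bound on the right
  have hFbound_r : ∀ R : ℝ, 1 ≤ R →
      (F R) ^ 2 * Kf R ≤ 2 * (∫ x in Ioi R, (u x) ^ 2 * Kf x) / R := by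
    intro R hR
    have hR0 : (0:ℝ) < R := lt_of_lt_of_le zero_lt_one hR
    have hFR : F R = -∫ t in Ioi R, u t := by
      have h := intervalIntegral.integral_Iic_add_Ioi (b := R) (μ := volume) (hint.integrableOn) (hint.integrableOn)
      rw [hmean] at h
      rw [hFdef]
      dsimp only
      linarith
    have hCS : (∫ t in Ioi R, u t) ^ 2
        ≤ (∫ x in Ioi R, (u x) ^ 2 * Kf x) * ∫ t in Ioi R, Real.exp (-t ^ 2 / 4) := by
      have hA : Integrable (fun t => (u t * Real.exp (t ^ 2 / 8)) ^ 2) (volume.restrict (Ioi R)) := by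
        simp only [e2]; exact h1.integrableOn
      have hB : Integrable (fun t => (Real.exp (-t ^ 2 / 8)) ^ 2) (volume.restrict (Ioi R)) := by
        simp only [e3]; exact hgauss_int.integrableOn
      have hAB : Integrable (fun t => (u t * Real.exp (t ^ 2 / 8)) * Real.exp (-t ^ 2 / 8))
          (volume.restrict (Ioi R)) := by
        simp only [e1]; exact hint.integrableOn
      have h := cs_integral (volume.restrict (Ioi R)) (fun t => u t * Real.exp (t ^ 2 / 8))
        (fun t => Real.exp (-t ^ 2 / 8)) hA hB hAB
      simp only [e1, e2, e3] at h
      exact h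
    have hgt : ∫ t in Ioi R, Real.exp (-t ^ 2 / 4) ≤ 2 / R * Real.exp (-R ^ 2 / 4) :=
      gauss_integral_tail hR
    have hgtnn : (0:ℝ) ≤ ∫ t in Ioi R, Real.exp (-t ^ 2 / 4) :=
      setIntegral_nonneg measurableSet_Ioi fun x _ => (Real.exp_pos _).le
    have step1 : (F R) ^ 2 ≤ (∫ x in Ioi R, (u x) ^ 2 * Kf x) * (2 / R * Real.exp (-R ^ 2 / 4)) := by
      rw [hFR, neg_pow]
      simp only [neg_neg, one_mul, neg_one_sq]
      calc (∫ t in Ioi R, u t) ^ 2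
          ≤ (∫ x in Ioi R, (u x) ^ 2 * Kf x) * ∫ t in Ioi R, Real.exp (-t ^ 2 / 4) := hCS
        _ ≤ (∫ x in Ioi R, (u x) ^ 2 * Kf x) * (2 / R * Real.exp (-R ^ 2 / 4)) :=
            mul_le_mul_of_nonneg_left hgt (hTpnn R)
    calc (F R) ^ 2 * Kf R
        ≤ ((∫ x in Ioi R, (u x) ^ 2 * Kf x) * (2 / R * Real.exp (-R ^ 2 / 4))) * Kf R :=
          mul_le_mul_of_nonneg_right step1 (le_of_lt (by rw [hKf]; exact Real.exp_pos _))
      _ = (2 * (∫ x in Ioi R, (u x) ^ 2 * Kf x) / R) * (Real.exp (-R ^ 2 / 4) * Kf R) := by ring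
      _ = 2 * (∫ x in Ioi R, (u x) ^ 2 * Kf x) / R := by rw [hKinv R, mul_one]
  -- F bound on the left
  have hFbound_l : ∀ R : ℝ, 1 ≤ R →
      (F (-R)) ^ 2 * Kf R ≤ 2 * (∫ x in Iio (-R), (u x) ^ 2 * Kf x) / R := by
    intro R hR
    have hR0 : (0:ℝ) < R := lt_of_lt_of_le zero_lt_one hR
    have hgsym : ∫ x in Iio (-R), Real.exp (-x ^ 2 / 4) ≤ 2 / R * Real.exp (-R ^ 2 / 4) := by
      have h := integral_comp_neg_Ioi R (fun t => Real.exp (-t ^ 2 / 4))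
      simp only [neg_sq] at h
      have h2 : ∫ x in Iic (-R), Real.exp (-x ^ 2 / 4) = ∫ x in Ioi R, Real.exp (-x ^ 2 / 4) :=
        h.symm
      have h3 : ∫ x in Iio (-R), Real.exp (-x ^ 2 / 4) = ∫ x in Iic (-R), Real.exp (-x ^ 2 / 4) := by
        rw [← integral_Iic_eq_integral_Iio]
      rw [h3, h2]
      exact gauss_integral_tail hR
    have hFmR : F (-R) = ∫ t in Iio (-R), u t := by
      rw [hFdef]
      dsimp only
      rw [← integral_Iic_eq_integral_Iio]
    have hCS : (∫ t in Iio (-R), u t) ^ 2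
        ≤ (∫ x in Iio (-R), (u x) ^ 2 * Kf x) * ∫ t in Iio (-R), Real.exp (-t ^ 2 / 4) := by
      have hA : Integrable (fun t => (u t * Real.exp (t ^ 2 / 8)) ^ 2)
          (volume.restrict (Iio (-R))) := by
        simp only [e2]; exact h1.integrableOn
      have hB : Integrable (fun t => (Real.exp (-t ^ 2 / 8)) ^ 2)
          (volume.restrict (Iio (-R))) := by
        simp only [e3]; exact hgauss_int.integrableOn
      have hAB : Integrable (fun t => (u t * Real.exp (t ^ 2 / 8)) * Real.exp (-t ^ 2 / 8))
          (volume.restrict (Iio (-R))) := by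
        simp only [e1]; exact hint.integrableOn
      have h := cs_integral (volume.restrict (Iio (-R))) (fun t => u t * Real.exp (t ^ 2 / 8))
        (fun t => Real.exp (-t ^ 2 / 8)) hA hB hAB
      simp only [e1, e2, e3] at h
      exact h
    have hgtnn : (0:ℝ) ≤ ∫ t in Iio (-R), Real.exp (-t ^ 2 / 4) :=
      setIntegral_nonneg measurableSet_Iio fun x _ => (Real.exp_pos _).le
    have step1 : (F (-R)) ^ 2
        ≤ (∫ x in Iio (-R), (u x) ^ 2 * Kf x) * (2 / R * Real.exp (-R ^ 2 / 4)) := by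
      rw [hFmR]
      calc (∫ t in Iio (-R), u t) ^ 2
          ≤ (∫ x in Iio (-R), (u x) ^ 2 * Kf x) * ∫ t in Iio (-R), Real.exp (-t ^ 2 / 4) := hCS
        _ ≤ (∫ x in Iio (-R), (u x) ^ 2 * Kf x) * (2 / R * Real.exp (-R ^ 2 / 4)) :=
            mul_le_mul_of_nonneg_left hgsym (hTmnn R)
    calc (F (-R)) ^ 2 * Kf R
        ≤ ((∫ x in Iio (-R), (u x) ^ 2 * Kf x) * (2 / R * Real.exp (-R ^ 2 / 4))) * Kf R :=
          mul_le_mul_of_nonneg_right step1 (le_of_lt (by rw [hKf]; exact Real.exp_pos _))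
      _ = (2 * (∫ x in Iio (-R), (u x) ^ 2 * Kf x) / R) * (Real.exp (-R ^ 2 / 4) * Kf R) := by ring
      _ = 2 * (∫ x in Iio (-R), (u x) ^ 2 * Kf x) / R := by rw [hKinv R, mul_one]
  -- continuity of the various integrands
  have hcw : Continuous fun x : ℝ => deriv u x + x / 2 * u x :=
    hcu'.add ((continuous_id.div_const 2).mul hcu)
  have hcu2K : Continuous fun x : ℝ => (u x) ^ 2 * Kf x := (hcu.pow 2).mul hcK
  have hcu'2K : Continuous fun x : ℝ => (deriv u x) ^ 2 * Kf x := (hcu'.pow 2).mul hcK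
  have hcF2K : Continuous fun x : ℝ => (F x) ^ 2 * Kf x := (hcF.pow 2).mul hcK
  have hcFwK : Continuous fun x : ℝ => F x * ((deriv u x + x / 2 * u x) * Kf x) :=
    hcF.mul (hcw.mul hcK)
  have hcw2K : Continuous fun x : ℝ => (deriv u x + x / 2 * u x) ^ 2 * Kf x :=
    (hcw.pow 2).mul hcK
  -- generic ground-state-transform identity (integration by parts on [-R, R])
  have hgen : ∀ g g' : ℝ → ℝ, (∀ x, HasDerivAt g (g' x) x) → Continuous g → Continuous g' →
      ∀ R : ℝ,
      (∫ x in -R..R, (g' x + x / 2 * g x) ^ 2 * Kf x)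
        = (∫ x in -R..R, (g' x) ^ 2 * Kf x) - (∫ x in -R..R, (g x) ^ 2 * Kf x) / 2
          + (R / 2 * (g R) ^ 2 * Kf R + R / 2 * (g (-R)) ^ 2 * Kf (-R)) := by
    intro g g' hgd hcg hcg' R
    have hHd : ∀ x : ℝ, HasDerivAt (fun y => y / 2 * (g y) ^ 2 * Kf y)
        ((g' x + x / 2 * g x) ^ 2 * Kf x - (g' x) ^ 2 * Kf x + (g x) ^ 2 * Kf x / 2) x := by
      intro x
      have hd := (((hasDerivAt_id x).div_const 2).mul ((hgd x).pow 2)).mul (hKd x)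
      refine hd.congr_deriv ?_
      simp only [id_eq, Pi.mul_apply, Pi.pow_apply]
      norm_num
      ring
    have hA : Continuous fun x : ℝ => (g' x + x / 2 * g x) ^ 2 * Kf x :=
      ((hcg'.add ((continuous_id.div_const 2).mul hcg)).pow 2).mul hcK
    have hB : Continuous fun x : ℝ => (g' x) ^ 2 * Kf x := (hcg'.pow 2).mul hcK
    have hC : Continuous fun x : ℝ => (g x) ^ 2 * Kf x := (hcg.pow 2).mul hcK
    have hftc := intervalIntegral.integral_eq_sub_of_hasDerivAt (a := -R) (b := R)
      (fun x _ => hHd x) (((hA.sub hB).add (hC.div_const 2)).intervalIntegrable _ _)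
    erw [intervalIntegral.integral_add ((hA.sub hB).intervalIntegrable _ _)
        ((hC.div_const 2).intervalIntegrable _ _),
      intervalIntegral.integral_sub (hA.intervalIntegrable _ _) (hB.intervalIntegrable _ _),
      intervalIntegral.integral_div] at hftc
    have : (-R) / 2 * (g (-R)) ^ 2 * Kf (-R) = -(R / 2 * (g (-R)) ^ 2 * Kf (-R)) := by ring
    rw [this] at hftc
    linarith
  -- integration by parts for `∫ u² K`
  have hIBP_a : ∀ R : ℝ,
      (∫ x in -R..R, (u x) ^ 2 * Kf x)
        + (∫ x in -R..R, F x * ((deriv u x + x / 2 * u x) * Kf x))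
        = F R * (u R * Kf R) - F (-R) * (u (-R) * Kf (-R)) := by
    intro R
    have hΦd : ∀ x : ℝ, HasDerivAt (fun y => F y * (u y * Kf y))
        ((u x) ^ 2 * Kf x + F x * ((deriv u x + x / 2 * u x) * Kf x)) x := by
      intro x
      have hd := (hFd x).mul ((hud x).mul (hKd x))
      refine hd.congr_deriv ?_
      simp only [Pi.mul_apply]
      ring
    have hftc := intervalIntegral.integral_eq_sub_of_hasDerivAt (a := -R) (b := R)
      (fun x _ => hΦd x) ((hcu2K.add hcFwK).intervalIntegrable _ _)
    rw [intervalIntegral.integral_add (hcu2K.intervalIntegrable _ _)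
      (hcFwK.intervalIntegrable _ _)] at hftc
    exact hftc
  -- Cauchy-Schwarz on the interval
  have hCSint : ∀ R : ℝ, 0 ≤ R →
      (∫ x in -R..R, F x * ((deriv u x + x / 2 * u x) * Kf x)) ^ 2
        ≤ (∫ x in -R..R, (F x) ^ 2 * Kf x)
          * (∫ x in -R..R, (deriv u x + x / 2 * u x) ^ 2 * Kf x) := by
    intro R hR
    have hle : -R ≤ R := by linarith
    have eF2 : ∀ x : ℝ, (F x * Real.exp (x ^ 2 / 8)) ^ 2 = (F x) ^ 2 * Kf x := by
      intro x; rw [mul_pow, pow_two (Real.exp _), hexp8 x]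
    have ew2 : ∀ x : ℝ, ((deriv u x + x / 2 * u x) * Real.exp (x ^ 2 / 8)) ^ 2
        = (deriv u x + x / 2 * u x) ^ 2 * Kf x := by
      intro x; rw [mul_pow, pow_two (Real.exp _), hexp8 x]
    have eFw : ∀ x : ℝ, (F x * Real.exp (x ^ 2 / 8))
        * ((deriv u x + x / 2 * u x) * Real.exp (x ^ 2 / 8))
        = F x * ((deriv u x + x / 2 * u x) * Kf x) := by
      intro x
      rw [← hexp8 x]
      ring
    simp only [intervalIntegral.integral_of_le hle]
    have h := cs_integral (volume.restrict (Ioc (-R) R))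
      (fun x => F x * Real.exp (x ^ 2 / 8))
      (fun x => (deriv u x + x / 2 * u x) * Real.exp (x ^ 2 / 8)) ?_ ?_ ?_
    · simp only [eF2, ew2, eFw] at h
      exact h
    · simp only [eF2]
      exact hcF2K.integrableOn_Ioc
    · simp only [ew2]
      exact hcw2K.integrableOn_Ioc
    · simp only [eFw]
      exact hcFwK.integrableOn_Ioc
  have hKpos : ∀ x : ℝ, 0 < Kf x := fun x => by rw [hKf]; exact Real.exp_pos _
  -- limits of interval integrals
  have hnegtend : Tendsto (fun R : ℝ => -R) atTop atBot := by
    have := tendsto_neg_atBot_iff.mpr (tendsto_id (α := ℝ) (x := atTop))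
    exact this
  have hPtend : Tendsto (fun R : ℝ => ∫ x in -R..R, (u x) ^ 2 * Kf x) atTop (𝓝 P) :=
    intervalIntegral_tendsto_integral h1 hnegtend tendsto_id
  have hTptend : Tendsto (fun R : ℝ => ∫ x in Ioi R, (u x) ^ 2 * Kf x) atTop (𝓝 0) :=
    tail_tendsto_right h1
  have hTmtend : Tendsto (fun R : ℝ => ∫ x in Iio (-R), (u x) ^ 2 * Kf x) atTop (𝓝 0) :=
    tail_tendsto_left h1
  -- the main estimate, for every positive ε
  have main : ∀ ε : ℝ, 0 < ε →
      P ≤ 5 * ε + Real.sqrt ((2 * P + 4 * ε) * (D - P / 2 + ε)) := by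
    intro ε hε
    have hfreq : ∃ᶠ x in atTop,
        x * ((u x) ^ 2 * Kf x + (u (-x)) ^ 2 * Kf (-x)) < ε := by
      apply freq_small _ ?_ ?_ ε hε
      · intro x hx
        have h1' := hKpos x
        have h2' := hKpos (-x)
        nlinarith [sq_nonneg (u x), sq_nonneg (u (-x)), mul_nonneg (sq_nonneg (u x)) h1'.le,
          mul_nonneg (sq_nonneg (u (-x))) h2'.le]
      · have hq : IntegrableOn
            (fun x : ℝ => (u x) ^ 2 * Kf x + (u (-x)) ^ 2 * Kf (-x)) (Ioi 1) := by
          exact (h1.add h1.comp_neg).integrableOn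
        refine (integrable_congr ?_).mp hq
        filter_upwards [ae_restrict_mem measurableSet_Ioi] with x hx
        have hx0 : (0:ℝ) < x := lt_trans zero_lt_one hx
        field_simp
    have hev1 : ∀ᶠ R : ℝ in atTop, (1:ℝ) ≤ R := eventually_ge_atTop 1
    have hev2 : ∀ᶠ R : ℝ in atTop, |(∫ x in -R..R, (u x) ^ 2 * Kf x) - P| < ε := by
      have := Metric.tendsto_nhds.mp hPtend ε hε
      simpa [Real.dist_eq] using this
    have hev3 : ∀ᶠ R : ℝ in atTop, (∫ x in Ioi R, (u x) ^ 2 * Kf x) < ε := by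
      have := Metric.tendsto_nhds.mp hTptend ε hε
      refine this.mono fun R hR => ?_
      rw [Real.dist_eq, sub_zero] at hR
      exact lt_of_le_of_lt (le_abs_self _) hR
    have hev4 : ∀ᶠ R : ℝ in atTop, (∫ x in Iio (-R), (u x) ^ 2 * Kf x) < ε := by
      have := Metric.tendsto_nhds.mp hTmtend ε hε
      refine this.mono fun R hR => ?_
      rw [Real.dist_eq, sub_zero] at hR
      exact lt_of_le_of_lt (le_abs_self _) hR
    obtain ⟨R, hψR, hR1, hPRd, hTpR, hTmR⟩ :=
      (hfreq.and_eventually (hev1.and (hev2.and (hev3.and hev4)))).exists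
    have hRpos : (0:ℝ) < R := lt_of_lt_of_le zero_lt_one hR1
    have hle : -R ≤ R := by linarith
    have hKR := hKpos R
    have hKmR := hKpos (-R)
    -- nonnegativity of the various interval integrals
    have hPRnn : 0 ≤ ∫ x in -R..R, (u x) ^ 2 * Kf x :=
      intervalIntegral.integral_nonneg hle fun x _ => mul_nonneg (sq_nonneg _) (hKpos x).le
    have hWnn : 0 ≤ ∫ x in -R..R, (deriv u x + x / 2 * u x) ^ 2 * Kf x :=
      intervalIntegral.integral_nonneg hle fun x _ => mul_nonneg (sq_nonneg _) (hKpos x).le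
    have hXnn : 0 ≤ ∫ x in -R..R, (F x) ^ 2 * Kf x :=
      intervalIntegral.integral_nonneg hle fun x _ => mul_nonneg (sq_nonneg _) (hKpos x).le
    have hcnn : 0 ≤ ∫ x in -R..R, (u x + x / 2 * F x) ^ 2 * Kf x :=
      intervalIntegral.integral_nonneg hle fun x _ => mul_nonneg (sq_nonneg _) (hKpos x).le
    have hPR_le : (∫ x in -R..R, (u x) ^ 2 * Kf x) ≤ P := by
      rw [intervalIntegral.integral_of_le hle, hP]
      exact setIntegral_le_integral h1 (ae_of_all _ fun x => mul_nonneg (sq_nonneg _) (hKpos x).le)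
    have hDR_le : (∫ x in -R..R, (deriv u x) ^ 2 * Kf x) ≤ D := by
      rw [intervalIntegral.integral_of_le hle, hD]
      exact setIntegral_le_integral h2 (ae_of_all _ fun x => mul_nonneg (sq_nonneg _) (hKpos x).le)
    -- smallness of pointwise boundary terms
    have hbsum_nn1 : 0 ≤ (u R) ^ 2 * Kf R := mul_nonneg (sq_nonneg _) hKR.le
    have hbsum_nn2 : 0 ≤ (u (-R)) ^ 2 * Kf (-R) := mul_nonneg (sq_nonneg _) hKmR.le
    have huRsq : (u R) ^ 2 * Kf R ≤ ε / R := by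
      rw [le_div_iff₀ hRpos]
      nlinarith [hψR]
    have huRsq' : (u (-R)) ^ 2 * Kf (-R) ≤ ε / R := by
      rw [le_div_iff₀ hRpos]
      nlinarith [hψR]
    have hFbr := hFbound_r R hR1
    have hFbl := hFbound_l R hR1
    have hTpRnn := hTpnn R
    have hTmRnn := hTmnn R
    have hediv : ε / R ≤ ε := div_le_self hε.le hR1
    have hTpdiv : (2 * (∫ x in Ioi R, (u x) ^ 2 * Kf x)) / R ≤ 2 * ε :=
      le_trans (div_le_self (by linarith) hR1) (by linarith)
    have hTmdiv : (2 * (∫ x in Iio (-R), (u x) ^ 2 * Kf x)) / R ≤ 2 * ε :=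
      le_trans (div_le_self (by linarith) hR1) (by linarith)
    have hFRnn : 0 ≤ (F R) ^ 2 * Kf R := mul_nonneg (sq_nonneg _) hKR.le
    have hFmRnn : 0 ≤ (F (-R)) ^ 2 * Kf R := mul_nonneg (sq_nonneg _) hKR.le
    -- |Φ(R)| and |Φ(-R)| bounds
    have habs1 : |F R * (u R * Kf R)| ≤ 2 * ε := by
      have hz : (F R * (u R * Kf R)) ^ 2 ≤ 2 * ε ^ 2 := by
        have hzeq : (F R * (u R * Kf R)) ^ 2 = ((F R) ^ 2 * Kf R) * ((u R) ^ 2 * Kf R) := by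
          ring
        rw [hzeq]
        calc ((F R) ^ 2 * Kf R) * ((u R) ^ 2 * Kf R)
            ≤ (2 * ε) * (ε) :=
              mul_le_mul (hFbr.trans hTpdiv) (huRsq.trans hediv) hbsum_nn1 (by linarith)
          _ = 2 * ε ^ 2 := by ring
      refine abs_le.mpr ⟨?_, ?_⟩
      · nlinarith [hz, sq_nonneg (F R * (u R * Kf R) + 2 * ε)]
      · nlinarith [hz, sq_nonneg (F R * (u R * Kf R) - 2 * ε)]
    have habs2 : |F (-R) * (u (-R) * Kf (-R))| ≤ 2 * ε := by
      have hz : (F (-R) * (u (-R) * Kf (-R))) ^ 2 ≤ 2 * ε ^ 2 := by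
        have hzeq : (F (-R) * (u (-R) * Kf (-R))) ^ 2
            = ((F (-R)) ^ 2 * Kf R) * ((u (-R)) ^ 2 * Kf (-R)) := by
          rw [hKsymm R]
          ring
        rw [hzeq]
        calc ((F (-R)) ^ 2 * Kf R) * ((u (-R)) ^ 2 * Kf (-R))
            ≤ (2 * ε) * (ε) :=
              mul_le_mul (hFbl.trans hTmdiv) (huRsq'.trans hediv) hbsum_nn2 (by linarith)
          _ = 2 * ε ^ 2 := by ring
      refine abs_le.mpr ⟨?_, ?_⟩
      · nlinarith [hz, sq_nonneg (F (-R) * (u (-R) * Kf (-R)) + 2 * ε)]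
      · nlinarith [hz, sq_nonneg (F (-R) * (u (-R) * Kf (-R)) - 2 * ε)]
    -- the two ground-state identities
    have hb := hgen u (deriv u) hud hcu hcu' R
    have hc := hgen F u hFd hcF hcu R
    -- bound for X = ∫ F² K
    have hXb : (∫ x in -R..R, (F x) ^ 2 * Kf x)
        ≤ 2 * P + 4 * ε := by
      have e1 : R / 2 * ((F R) ^ 2 * Kf R) ≤ R / 2 * ((2 * (∫ x in Ioi R, (u x) ^ 2 * Kf x)) / R) :=
        mul_le_mul_of_nonneg_left hFbr (by linarith)
      have e1' : R / 2 * ((2 * (∫ x in Ioi R, (u x) ^ 2 * Kf x)) / R)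
          = ∫ x in Ioi R, (u x) ^ 2 * Kf x := by
        field_simp
      have e2 : R / 2 * ((F (-R)) ^ 2 * Kf R) ≤ R / 2 * ((2 * (∫ x in Iio (-R), (u x) ^ 2 * Kf x)) / R) :=
        mul_le_mul_of_nonneg_left hFbl (by linarith)
      have e2' : R / 2 * ((2 * (∫ x in Iio (-R), (u x) ^ 2 * Kf x)) / R)
          = ∫ x in Iio (-R), (u x) ^ 2 * Kf x := by
        field_simp
      have hs : R / 2 * (F R) ^ 2 * Kf R + R / 2 * (F (-R)) ^ 2 * Kf (-R) ≤ 2 * ε := by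
        rw [hKsymm R]
        linarith [e1, e2, e1', e2', hTpR, hTmR]
      linarith [hc, hcnn, hs, hPR_le]
    -- bound for W = ∫ w² K
    have hWb : (∫ x in -R..R, (deriv u x + x / 2 * u x) ^ 2 * Kf x)
        ≤ D - P / 2 + ε := by
      have hs : R / 2 * (u R) ^ 2 * Kf R + R / 2 * (u (-R)) ^ 2 * Kf (-R)
          = (R * ((u R) ^ 2 * Kf R + (u (-R)) ^ 2 * Kf (-R))) / 2 := by
        ring
      have hPRlow : P - ε ≤ ∫ x in -R..R, (u x) ^ 2 * Kf x := by
        have := abs_lt.mp hPRd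
        linarith [this.1]
      linarith [hb, hDR_le, hψR, hPRlow, hs]
    -- Cauchy-Schwarz
    have hx2 := hCSint R (by linarith)
    have hprod : (∫ x in -R..R, (F x) ^ 2 * Kf x)
          * (∫ x in -R..R, (deriv u x + x / 2 * u x) ^ 2 * Kf x)
        ≤ (2 * P + 4 * ε) * (D - P / 2 + ε) :=
      mul_le_mul hXb hWb hWnn (by linarith)
    have hFw : |∫ x in -R..R, F x * ((deriv u x + x / 2 * u x) * Kf x)|
        ≤ Real.sqrt ((2 * P + 4 * ε) * (D - P / 2 + ε)) := by
      rw [← Real.sqrt_sq_eq_abs]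
      exact Real.sqrt_le_sqrt (hx2.trans hprod)
    -- assemble
    have hPa := hIBP_a R
    have hPRlow : P - ε ≤ ∫ x in -R..R, (u x) ^ 2 * Kf x := by
      have := abs_lt.mp hPRd
      linarith [this.1]
    have h5 : (∫ x in -R..R, (u x) ^ 2 * Kf x)
        ≤ 2 * ε + 2 * ε + Real.sqrt ((2 * P + 4 * ε) * (D - P / 2 + ε)) := by
      have t1 : F R * (u R * Kf R) ≤ 2 * ε := le_trans (le_abs_self _) habs1
      have t2 : -(2 * ε) ≤ F (-R) * (u (-R) * Kf (-R)) := by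
        have := neg_abs_le (F (-R) * (u (-R) * Kf (-R)))
        linarith [habs2]
      have t3 : -(Real.sqrt ((2 * P + 4 * ε) * (D - P / 2 + ε)))
          ≤ ∫ x in -R..R, F x * ((deriv u x + x / 2 * u x) * Kf x) := by
        have := neg_abs_le (∫ x in -R..R, F x * ((deriv u x + x / 2 * u x) * Kf x))
        linarith [hFw]
      linarith [hPa]
    linarith [h5, hPRlow]
  -- pass to the limit ε → 0⁺
  have hlim : Tendsto (fun ε : ℝ => 5 * ε + Real.sqrt ((2 * P + 4 * ε) * (D - P / 2 + ε)))
      (𝓝[>] (0:ℝ)) (𝓝 (5 * 0 + Real.sqrt ((2 * P + 4 * 0) * (D - P / 2 + 0)))) := by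
    apply Tendsto.mono_left ?_ nhdsWithin_le_nhds
    apply Continuous.tendsto
    apply Continuous.add
    · exact continuous_const.mul continuous_id
    · exact Real.continuous_sqrt.comp
        (((continuous_const.add (continuous_const.mul continuous_id)).mul
          (continuous_const.add continuous_id)))
  have hP_le : P ≤ 5 * 0 + Real.sqrt ((2 * P + 4 * 0) * (D - P / 2 + 0)) := by
    refine ge_of_tendsto hlim ?_
    filter_upwards [self_mem_nhdsWithin] with ε hε
    exact main ε hε
  simp only [mul_zero, add_zero, zero_add] at hP_le
  rcases le_or_gt ((2 * P) * (D - P / 2)) 0 with hneg | hpos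
  · have h0 : Real.sqrt ((2 * P) * (D - P / 2)) = 0 := Real.sqrt_eq_zero_of_nonpos hneg
    rw [h0] at hP_le
    linarith
  · have h1' : Real.sqrt ((2 * P) * (D - P / 2)) ^ 2 = (2 * P) * (D - P / 2) :=
      Real.sq_sqrt hpos.le
    have h2' := Real.sqrt_nonneg ((2 * P) * (D - P / 2))
    have hsq : P ^ 2 ≤ (2 * P) * (D - P / 2) := by
      nlinarith [hP_le, h1', h2']
    by_contra hcon
    push_neg at hcon
    nlinarith [hsq, hDnn, mul_pos (sub_pos.mpr hcon) (lt_of_le_of_lt hDnn hcon)]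

end Key

end LNegAux

open LNegAux

set_option maxHeartbeats 1000000 in
/-- Negativity of `ℒ` on the stable subspace: for `u ∈ H²(K)` with `∫ u dξ = 0`,
`⟨ℒu, u⟩_{L²(K)} ≤ −(1/2)‖u‖²_{H¹(K)}` (with the equivalent `H¹(K)` norm `‖u'‖²_{L²(K)}`),
where `ℒu = u'' + (1/2)ξ u' + (1/2)u` and `K(ξ) = e^{ξ²/4}`. -/
theorem L_negative_on_stable_subspace (u : ℝ → ℝ) (hu : ContDiff ℝ 2 u)
    (hint : Integrable u) (hmean : (∫ ξ : ℝ, u ξ) = 0)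
    (h1 : Integrable fun ξ : ℝ => (u ξ) ^ 2 * Real.exp (ξ ^ 2 / 4))
    (h2 : Integrable fun ξ : ℝ => (deriv u ξ) ^ 2 * Real.exp (ξ ^ 2 / 4))
    (h3 : Integrable fun ξ : ℝ =>
      (deriv (deriv u) ξ + (1 / 2) * ξ * deriv u ξ + (1 / 2) * u ξ) * u ξ *
        Real.exp (ξ ^ 2 / 4)) :
    (∫ ξ : ℝ, (deriv (deriv u) ξ + (1 / 2) * ξ * deriv u ξ + (1 / 2) * u ξ) * u ξ *
        Real.exp (ξ ^ 2 / 4)) ≤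
      -(1 / 2) * ∫ ξ : ℝ, (deriv u ξ) ^ 2 * Real.exp (ξ ^ 2 / 4) := by
  have hPD := key_P_le_D u hu hint hmean h1 h2
  set Kf : ℝ → ℝ := fun x => Real.exp (x ^ 2 / 4) with hKf
  set P : ℝ := ∫ ξ : ℝ, (u ξ) ^ 2 * Kf ξ with hP
  set D : ℝ := ∫ ξ : ℝ, (deriv u ξ) ^ 2 * Kf ξ with hD
  set I : ℝ := ∫ ξ : ℝ,
    (deriv (deriv u) ξ + (1 / 2) * ξ * deriv u ξ + (1 / 2) * u ξ) * u ξ * Kf ξ with hI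
  have hKpos : ∀ x : ℝ, 0 < Kf x := fun x => by rw [hKf]; exact Real.exp_pos _
  -- smoothness facts
  have hu2 : ContDiff ℝ (1 + 1) u := by
    have he : ((1 : WithTop ℕ∞) + 1) = 2 := by norm_num
    rw [he]
    exact hu
  rw [contDiff_succ_iff_deriv] at hu2
  obtain ⟨hdiffu, -, hu1⟩ := hu2
  have hcu : Continuous u := hdiffu.continuous
  obtain ⟨hdiffu', hcu''⟩ := contDiff_one_iff_deriv.mp hu1
  have hcu' : Continuous (deriv u) := hdiffu'.continuous
  have hud : ∀ x : ℝ, HasDerivAt u (deriv u x) x := fun x => (hdiffu x).hasDerivAt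
  have hu'd : ∀ x : ℝ, HasDerivAt (deriv u) (deriv (deriv u) x) x :=
    fun x => (hdiffu' x).hasDerivAt
  have hcK : Continuous Kf := Real.continuous_exp.comp ((continuous_pow 2).div_const 4)
  have hKd : ∀ x : ℝ, HasDerivAt Kf (x / 2 * Kf x) x := by
    intro x
    have hq : HasDerivAt (fun y : ℝ => y ^ 2 / 4) ((2 : ℕ) * x ^ 1 / 4) x :=
      (hasDerivAt_pow 2 x).div_const 4
    have := hq.exp
    rw [hKf]
    convert this using 1
    ring
  -- continuity of integrands
  have hcu2K : Continuous fun x : ℝ => (u x) ^ 2 * Kf x := (hcu.pow 2).mul hcK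
  have hcu'2K : Continuous fun x : ℝ => (deriv u x) ^ 2 * Kf x := (hcu'.pow 2).mul hcK
  have hcL : Continuous fun x : ℝ =>
      (deriv (deriv u) x + (1 / 2) * x * deriv u x + (1 / 2) * u x) * u x * Kf x :=
    (((hcu''.add ((continuous_const.mul continuous_id).mul hcu')).add
      (continuous_const.mul hcu)).mul hcu).mul hcK
  -- the integration by parts identity on [-R, R]
  have hibp : ∀ R : ℝ,
      (∫ x in -R..R, (deriv (deriv u) x + (1 / 2) * x * deriv u x + (1 / 2) * u x) * u x * Kf x)
        = (u R * deriv u R * Kf R - u (-R) * deriv u (-R) * Kf (-R))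
          - (∫ x in -R..R, (deriv u x) ^ 2 * Kf x)
          + (1 / 2) * ∫ x in -R..R, (u x) ^ 2 * Kf x := by
    intro R
    have hG1d : ∀ x : ℝ, HasDerivAt (fun y => u y * deriv u y * Kf y)
        ((deriv (deriv u) x + (1 / 2) * x * deriv u x + (1 / 2) * u x) * u x * Kf x
          + (deriv u x) ^ 2 * Kf x - (1 / 2) * ((u x) ^ 2 * Kf x)) x := by
      intro x
      have hd := ((hud x).mul (hu'd x)).mul (hKd x)
      refine hd.congr_deriv ?_
      simp only [Pi.mul_apply]
      ring
    have hcall : Continuous fun x : ℝ =>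
        (deriv (deriv u) x + (1 / 2) * x * deriv u x + (1 / 2) * u x) * u x * Kf x
          + (deriv u x) ^ 2 * Kf x - (1 / 2) * ((u x) ^ 2 * Kf x) :=
      (hcL.add hcu'2K).sub (continuous_const.mul hcu2K)
    have hftc := intervalIntegral.integral_eq_sub_of_hasDerivAt (a := -R) (b := R)
      (fun x _ => hG1d x) (hcall.intervalIntegrable _ _)
    erw [intervalIntegral.integral_sub ((hcL.add hcu'2K).intervalIntegrable _ _)
        ((continuous_const.mul hcu2K).intervalIntegrable _ _),
      intervalIntegral.integral_add (hcL.intervalIntegrable _ _)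
        (hcu'2K.intervalIntegrable _ _),
      intervalIntegral.integral_const_mul] at hftc
    linarith [hftc]
  -- integrability and limits
  have hnegtend : Tendsto (fun R : ℝ => -R) atTop atBot := by
    exact tendsto_neg_atBot_iff.mpr (tendsto_id (α := ℝ) (x := atTop))
  have hItend : Tendsto (fun R : ℝ => ∫ x in -R..R,
      (deriv (deriv u) x + (1 / 2) * x * deriv u x + (1 / 2) * u x) * u x * Kf x)
      atTop (𝓝 I) := intervalIntegral_tendsto_integral h3 hnegtend tendsto_id
  have hDtend : Tendsto (fun R : ℝ => ∫ x in -R..R, (deriv u x) ^ 2 * Kf x)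
      atTop (𝓝 D) := intervalIntegral_tendsto_integral h2 hnegtend tendsto_id
  -- integrability of the boundary function
  have hG1int : Integrable (fun x : ℝ => u x * deriv u x * Kf x) := by
    refine Integrable.mono' ((h1.add h2).const_mul (1 / 2)) ?_ ?_
    · exact ((hcu.mul hcu').mul hcK).aestronglyMeasurable
    · refine ae_of_all _ fun x => ?_
      simp only [Pi.add_apply, hKf]
      have hK : 0 < Real.exp (x ^ 2 / 4) := Real.exp_pos _
      have hs := sq_nonneg (|u x| - |deriv u x|)
      rw [Real.norm_eq_abs, abs_mul, abs_mul, abs_of_pos hK]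
      nlinarith [sq_abs (u x), sq_abs (deriv u x), abs_nonneg (u x), abs_nonneg (deriv u x)]
  have main : ∀ ε : ℝ, 0 < ε → I ≤ -(1 / 2) * D + 4 * ε := by
    intro ε hε
    have hfreq : ∃ᶠ x in atTop,
        |u x * deriv u x * Kf x| + |u (-x) * deriv u (-x) * Kf (-x)| < ε := by
      apply freq_small _ ?_ ?_ ε hε
      · intro x _
        positivity
      · have hq : IntegrableOn
            (fun x : ℝ => |u x * deriv u x * Kf x| + |u (-x) * deriv u (-x) * Kf (-x)|)
            (Ioi 1) := by
          exact (hG1int.abs.add hG1int.abs.comp_neg).integrableOn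
        refine Integrable.mono' hq ?_ ?_
        · apply AEMeasurable.aestronglyMeasurable
          apply AEMeasurable.div
          · exact (((hcu.mul hcu').mul hcK).abs.add
              ((((hcu.comp continuous_neg).mul (hcu'.comp continuous_neg)).mul
                (hcK.comp continuous_neg)).abs)).aemeasurable
          · exact aemeasurable_id
        · filter_upwards [ae_restrict_mem measurableSet_Ioi] with x hx
          have hx1 : (1:ℝ) < x := hx
          have hx0 : (0:ℝ) < x := lt_trans zero_lt_one hx1
          have hnum : 0 ≤ |u x * deriv u x * Kf x| + |u (-x) * deriv u (-x) * Kf (-x)| :=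
            add_nonneg (abs_nonneg _) (abs_nonneg _)
          rw [Real.norm_eq_abs, abs_of_nonneg (div_nonneg hnum hx0.le)]
          exact (div_le_self hnum hx1.le).trans (le_refl _)
    have hev1 : ∀ᶠ R : ℝ in atTop, (1:ℝ) ≤ R := eventually_ge_atTop 1
    have hev2 : ∀ᶠ R : ℝ in atTop, |(∫ x in -R..R,
        (deriv (deriv u) x + (1 / 2) * x * deriv u x + (1 / 2) * u x) * u x * Kf x) - I| < ε := by
      have := Metric.tendsto_nhds.mp hItend ε hε
      simpa [Real.dist_eq] using this
    have hev3 : ∀ᶠ R : ℝ in atTop, |(∫ x in -R..R, (deriv u x) ^ 2 * Kf x) - D| < ε := by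
      have := Metric.tendsto_nhds.mp hDtend ε hε
      simpa [Real.dist_eq] using this
    obtain ⟨R, hψR, hR1, hIe, hDe⟩ := (hfreq.and_eventually (hev1.and (hev2.and hev3))).exists
    have hle : -R ≤ R := by linarith
    have hPR_le : (∫ x in -R..R, (u x) ^ 2 * Kf x) ≤ P := by
      rw [intervalIntegral.integral_of_le hle, hP]
      exact setIntegral_le_integral h1 (ae_of_all _ fun x => mul_nonneg (sq_nonneg _) (hKpos x).le)
    have hIb := hibp R
    have t1 : u R * deriv u R * Kf R ≤ ε := by
      have := le_abs_self (u R * deriv u R * Kf R)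
      have h2' := abs_nonneg (u (-R) * deriv u (-R) * Kf (-R))
      linarith
    have t2 : -ε ≤ u (-R) * deriv u (-R) * Kf (-R) := by
      have := neg_abs_le (u (-R) * deriv u (-R) * Kf (-R))
      have h2' := abs_nonneg (u R * deriv u R * Kf R)
      linarith
    have hDval := abs_lt.mp hDe
    have hIval := abs_lt.mp hIe
    linarith [hPD, hIb, hIval.1, hDval.1, hPR_le]
  apply le_of_forall_pos_le_add
  intro ε hε
  have := main (ε / 4) (by linarith)
  linarith
end

section
/- Interpolation bound for the cubic weighted integral: there is a constant C > 0 such that for all v ∈ H¹(K) with v bounded, |∫_ℝ v(ξ)³ K'(ξ) dξ| ≤ C ‖v'‖_{L²(K)} ‖v‖_{L²(K)} ‖v‖_{L^∞(ℝ)}, where K(ξ) = exp(ξ²/4). -/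
open Real MeasureTheory

lemma cs_integral (F G : ℝ → ℝ) (hF : AEStronglyMeasurable F (volume : Measure ℝ))
    (hG : AEStronglyMeasurable G (volume : Measure ℝ))
    (hFn : ∀ x, 0 ≤ F x) (hGn : ∀ x, 0 ≤ G x)
    (hF2 : Integrable (fun x => F x ^ 2)) (hG2 : Integrable (fun x => G x ^ 2)) :
    ∫ x, F x * G x ≤ Real.sqrt (∫ x, F x ^ 2) * Real.sqrt (∫ x, G x ^ 2) := by
  have hpq : Real.HolderConjugate 2 2 := ⟨by norm_num, by norm_num, by norm_num⟩
  have h2 : (ENNReal.ofReal (2:ℝ)) = 2 := by norm_num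
  have hFm : MemLp F (ENNReal.ofReal (2:ℝ)) := by
    rw [h2]; exact (memLp_two_iff_integrable_sq hF).mpr hF2
  have hGm : MemLp G (ENNReal.ofReal (2:ℝ)) := by
    rw [h2]; exact (memLp_two_iff_integrable_sq hG).mpr hG2
  have := integral_mul_le_Lp_mul_Lq_of_nonneg hpq
    (Filter.Eventually.of_forall hFn) (Filter.Eventually.of_forall hGn) hFm hGm
  have e1 : ∀ (H : ℝ → ℝ), (∫ x, H x ^ (2:ℝ)) = ∫ x, H x ^ 2 := by
    intro H; congr 1; funext x
    rw [show ((2:ℝ) = ((2:ℕ):ℝ)) by norm_num, Real.rpow_natCast]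
  calc ∫ x, F x * G x ≤ (∫ x, F x ^ (2:ℝ)) ^ ((1:ℝ)/2) * (∫ x, G x ^ (2:ℝ)) ^ ((1:ℝ)/2) := this
    _ = Real.sqrt (∫ x, F x ^ 2) * Real.sqrt (∫ x, G x ^ 2) := by
        rw [e1, e1, ← Real.sqrt_eq_rpow, ← Real.sqrt_eq_rpow]

/-- Interpolation bound for the cubic weighted integral: there is `C > 0` such that for
all bounded `v ∈ H¹(K)`, `|∫ v³ K'| ≤ C ‖v'‖_{L²(K)} ‖v‖_{L²(K)} ‖v‖_{L^∞}`, where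
`K(ξ) = e^{ξ²/4}`. -/
theorem cubic_interpolation_bound :
    ∃ C > (0 : ℝ), ∀ (v : ℝ → ℝ) (M : ℝ), Differentiable ℝ v →
      Integrable (fun ξ : ℝ => (v ξ) ^ 2 * Real.exp (ξ ^ 2 / 4)) →
      Integrable (fun ξ : ℝ => (deriv v ξ) ^ 2 * Real.exp (ξ ^ 2 / 4)) →
      (∀ ξ : ℝ, |v ξ| ≤ M) →
      |∫ ξ : ℝ, (v ξ) ^ 3 * deriv (fun x : ℝ => Real.exp (x ^ 2 / 4)) ξ| ≤
        C * Real.sqrt (∫ ξ : ℝ, (deriv v ξ) ^ 2 * Real.exp (ξ ^ 2 / 4)) *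
          Real.sqrt (∫ ξ : ℝ, (v ξ) ^ 2 * Real.exp (ξ ^ 2 / 4)) * M := by
  refine ⟨3, by norm_num, ?_⟩
  intro v M hv hv2 hv'2 hM
  have hM0 : 0 ≤ M := le_trans (abs_nonneg _) (hM 0)
  set K : ℝ → ℝ := fun ξ => Real.exp (ξ ^ 2 / 4) with hKdef
  have hKpos : ∀ ξ, 0 < K ξ := fun ξ => Real.exp_pos _
  have hKd : ∀ ξ : ℝ, HasDerivAt K (ξ / 2 * K ξ) ξ := by
    intro ξ
    have h1 : HasDerivAt (fun x : ℝ => x ^ 2 / 4) (ξ / 2) ξ := by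
      have := (hasDerivAt_pow 2 ξ).div_const 4
      refine this.congr_deriv ?_; push_cast; ring
    have := h1.exp
    simpa [mul_comm] using this
  have hrw : ∀ ξ : ℝ, deriv (fun x : ℝ => Real.exp (x ^ 2 / 4)) ξ = ξ / 2 * K ξ :=
    fun ξ => (hKd ξ).deriv
  simp only [show deriv K = fun ξ => ξ / 2 * K ξ from funext hrw]
  set f : ℝ → ℝ := fun ξ => (v ξ) ^ 3 * (ξ / 2 * K ξ) with hfdef
  set h : ℝ → ℝ := fun ξ => 3 * (v ξ) ^ 2 * deriv v ξ * K ξ with hhdef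
  set g : ℝ → ℝ := fun ξ => (v ξ) ^ 3 * K ξ with hgdef
  have hKc : Continuous K := by continuity
  have hvC : Continuous v := hv.continuous
  have hv'm : AEStronglyMeasurable (deriv v) (volume : Measure ℝ) :=
    (measurable_deriv v).aestronglyMeasurable
  have hhm : AEStronglyMeasurable h (volume : Measure ℝ) := by
    apply AEStronglyMeasurable.mul _ hKc.aestronglyMeasurable
    exact ((aestronglyMeasurable_const.mul (hvC.pow 2).aestronglyMeasurable).mul hv'm)
  -- integrability of h
  have hh_int : Integrable h := by
    refine ((hv2.add hv'2).const_mul (3 * M / 2)).mono hhm ?_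
    filter_upwards with ξ
    have h1 : |v ξ| * |deriv v ξ| ≤ ((v ξ)^2 + (deriv v ξ)^2) / 2 := by
      nlinarith [sq_nonneg (|v ξ| - |deriv v ξ|), sq_abs (v ξ), sq_abs (deriv v ξ)]
    have hKp := (hKpos ξ).le
    have h2 : ‖h ξ‖ = 3 * (v ξ)^2 * |deriv v ξ| * K ξ := by
      simp only [hhdef, Real.norm_eq_abs, abs_mul, abs_of_nonneg hKp, abs_of_nonneg (sq_nonneg (v ξ))]
      rw [abs_of_nonneg (by norm_num : (0:ℝ) ≤ 3)]
    rw [h2]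
    have h3 : (v ξ)^2 ≤ M * |v ξ| := by
      nlinarith [sq_abs (v ξ), abs_nonneg (v ξ), hM ξ]
    have h4 : 3 * (v ξ)^2 * |deriv v ξ| * K ξ ≤ 3 * M * (|v ξ| * |deriv v ξ|) * K ξ := by
      have := mul_le_mul_of_nonneg_right (mul_le_mul_of_nonneg_right
        (mul_le_mul_of_nonneg_left h3 (by norm_num : (0:ℝ) ≤ 3)) (abs_nonneg (deriv v ξ))) hKp
      calc 3 * (v ξ)^2 * |deriv v ξ| * K ξ ≤ 3 * (M * |v ξ|) * |deriv v ξ| * K ξ := this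
        _ = 3 * M * (|v ξ| * |deriv v ξ|) * K ξ := by ring
    refine h4.trans ?_
    have h5 : 3 * M * (|v ξ| * |deriv v ξ|) * K ξ ≤ 3 * M * (((v ξ)^2 + (deriv v ξ)^2)/2) * K ξ := by
      apply mul_le_mul_of_nonneg_right _ hKp
      apply mul_le_mul_of_nonneg_left h1 (by positivity)
    refine h5.trans ?_
    rw [Real.norm_eq_abs]
    have : 3 * M * (((v ξ)^2 + (deriv v ξ)^2)/2) * K ξ
        = 3 * M / 2 * ((v ξ)^2 * K ξ + (deriv v ξ)^2 * K ξ) := by ring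
    rw [this]
    exact le_abs_self _
  -- integrability of g
  have hg_int : Integrable g := by
    refine (hv2.const_mul M).mono
      (((hvC.pow 3).mul hKc).aestronglyMeasurable) ?_
    filter_upwards with ξ
    have hKp := (hKpos ξ).le
    have h1 : ‖g ξ‖ = |v ξ|^3 * K ξ := by
      simp only [hgdef, Real.norm_eq_abs, abs_mul, abs_pow, abs_of_nonneg hKp]
    rw [h1, Real.norm_eq_abs]
    have h2 : |v ξ|^3 ≤ M * (v ξ)^2 := by
      nlinarith [sq_abs (v ξ), abs_nonneg (v ξ), hM ξ]
    calc |v ξ|^3 * K ξ ≤ M * (v ξ)^2 * K ξ := mul_le_mul_of_nonneg_right h2 hKp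
      _ = M * ((v ξ)^2 * K ξ) := by ring
      _ ≤ |M * ((v ξ)^2 * K ξ)| := le_abs_self _
  -- the key bound on |∫ h|
  have key : |∫ ξ, h ξ| ≤ 3 * Real.sqrt (∫ ξ, (deriv v ξ)^2 * K ξ) *
      Real.sqrt (∫ ξ, (v ξ)^2 * K ξ) * M := by
    set F : ℝ → ℝ := fun ξ => |deriv v ξ| * Real.sqrt (K ξ) with hFdef
    set G : ℝ → ℝ := fun ξ => |v ξ| * Real.sqrt (K ξ) with hGdef
    have hFsq : ∀ ξ, F ξ ^ 2 = (deriv v ξ)^2 * K ξ := by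
      intro ξ; simp only [hFdef, mul_pow, sq_abs, Real.sq_sqrt (hKpos ξ).le]
    have hGsq : ∀ ξ, G ξ ^ 2 = (v ξ)^2 * K ξ := by
      intro ξ; simp only [hGdef, mul_pow, sq_abs, Real.sq_sqrt (hKpos ξ).le]
    have hF2 : Integrable (fun ξ => F ξ ^ 2) := by
      simpa only [hFsq] using hv'2
    have hG2 : Integrable (fun ξ => G ξ ^ 2) := by
      simpa only [hGsq] using hv2
    have hFm : AEStronglyMeasurable F (volume : Measure ℝ) :=
      (hv'm.norm.mul (hKc.sqrt.aestronglyMeasurable))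
    have hGm : AEStronglyMeasurable G (volume : Measure ℝ) :=
      ((hvC.abs.mul hKc.sqrt).aestronglyMeasurable)
    have hFG_int : Integrable (fun ξ => F ξ * G ξ) := by
      refine ((hF2.add hG2).const_mul (1/2)).mono (hFm.mul hGm) ?_
      filter_upwards with ξ
      have hFn : 0 ≤ F ξ := by positivity
      have hGn : 0 ≤ G ξ := by positivity
      rw [Real.norm_eq_abs, abs_of_nonneg (mul_nonneg hFn hGn), Real.norm_eq_abs]
      have : F ξ * G ξ ≤ 1/2 * (F ξ^2 + G ξ^2) := by nlinarith [sq_nonneg (F ξ - G ξ)]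
      exact this.trans (le_abs_self _)
    have hCS := cs_integral F G hFm hGm (fun ξ => by positivity) (fun ξ => by positivity) hF2 hG2
    have habs : |∫ ξ, h ξ| ≤ ∫ ξ, 3 * M * (F ξ * G ξ) := by
      have h1 : |∫ ξ, h ξ| ≤ ∫ ξ, ‖h ξ‖ := norm_integral_le_integral_norm h
      refine h1.trans (integral_mono hh_int.norm (hFG_int.const_mul (3*M)) ?_)
      intro ξ
      show ‖h ξ‖ ≤ 3 * M * (F ξ * G ξ)
      have hKp := (hKpos ξ).le
      have hsq : Real.sqrt (K ξ) * Real.sqrt (K ξ) = K ξ := Real.mul_self_sqrt hKp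
      have h2 : ‖h ξ‖ = 3 * (v ξ)^2 * |deriv v ξ| * K ξ := by
        simp only [hhdef, Real.norm_eq_abs, abs_mul, abs_of_nonneg hKp,
          abs_of_nonneg (sq_nonneg (v ξ))]
        rw [abs_of_nonneg (by norm_num : (0:ℝ) ≤ 3)]
      rw [h2]
      have h3 : (v ξ)^2 ≤ M * |v ξ| := by
        nlinarith [sq_abs (v ξ), abs_nonneg (v ξ), hM ξ]
      have : 3 * M * (F ξ * G ξ) = 3 * M * (|v ξ| * |deriv v ξ|) * K ξ := by
        simp only [hFdef, hGdef]; rw [show |deriv v ξ| * Real.sqrt (K ξ) * (|v ξ| * Real.sqrt (K ξ))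
          = |v ξ| * |deriv v ξ| * (Real.sqrt (K ξ) * Real.sqrt (K ξ)) by ring, hsq]; ring
      rw [this]
      nlinarith [abs_nonneg (deriv v ξ), hKpos ξ, mul_le_mul_of_nonneg_right
        (mul_le_mul_of_nonneg_right h3 (abs_nonneg (deriv v ξ))) hKp]
    have hint_mul : ∫ ξ, 3 * M * (F ξ * G ξ) = 3 * M * ∫ ξ, F ξ * G ξ :=
      integral_const_mul _ _
    rw [hint_mul] at habs
    refine habs.trans ?_
    have h3M : (0:ℝ) ≤ 3 * M := by positivity
    calc 3 * M * ∫ ξ, F ξ * G ξ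
        ≤ 3 * M * (Real.sqrt (∫ ξ, F ξ ^ 2) * Real.sqrt (∫ ξ, G ξ ^ 2)) :=
          mul_le_mul_of_nonneg_left hCS h3M
      _ = 3 * Real.sqrt (∫ ξ, (deriv v ξ)^2 * K ξ) * Real.sqrt (∫ ξ, (v ξ)^2 * K ξ) * M := by
          simp only [funext hFsq, funext hGsq]; ring
  by_cases hf_int : Integrable f
  · -- integration by parts
    have hg' : ∀ ξ, HasDerivAt g (h ξ + f ξ) ξ := by
      intro ξ
      have h1 : HasDerivAt v (deriv v ξ) ξ := (hv ξ).hasDerivAt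
      have h2 : HasDerivAt (fun x => (v x) ^ 3) (3 * (v ξ)^2 * deriv v ξ) ξ := by
        have := h1.pow 3
        exact this.congr_deriv (by norm_num)
      have := h2.mul (hKd ξ)
      exact this
    have hzero : ∫ ξ, (h ξ + f ξ) = 0 :=
      integral_eq_zero_of_hasDerivAt_of_integrable hg' (hh_int.add hf_int) hg_int
    rw [integral_add hh_int hf_int] at hzero
    have : ∫ ξ, f ξ = - ∫ ξ, h ξ := by linarith
    calc |∫ ξ, (v ξ)^3 * (ξ/2 * K ξ)| = |∫ ξ, f ξ| := rfl
      _ = |∫ ξ, h ξ| := by rw [this, abs_neg]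
      _ ≤ _ := key
  · rw [integral_undef hf_int]
    simp only [abs_zero]
    positivity
end
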